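/- arXiv:math/0009074 — 4 statements merged into one kernel-verified Lean document; each statement's English description precedes it below -/
import Mathlib

section
/- For every function φ: ℕ → ℂ one has ‖φ‖_{M₂} ≤ 4·sup_{n≥0} (Σ_{2ⁿ ≤ i < 2^{n+1}} |φ(i)|²)^{1/2} + |φ(0)| (the inequality being vacuous when the right-hand side is infinite). (Lemma 2.4.) -/
open MeasureTheory
open scoped ENNReal

noncomputable section

/-- The complex Hilbert space `ℓ²(ℕ)`. -/
abbrev ℓ2 : Type := lp (fun _ : ℕ => ℂ) 2

/-- The `M₂(ℕ)` norm of `φ : ℕ → ℂ`: the infimum of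
`(sup_i ‖x_i‖)·(sup_j ‖y_j‖)` over all sequences `x, y` in `ℓ²(ℕ)` with
`φ(i+j) = ⟨x_i, y_j⟩` for all `i, j` (`+∞` if no such bounded data exist;
unbounded sequences contribute `+∞` via the `ℝ≥0∞`-valued suprema). -/
def M2 (φ : ℕ → ℂ) : ℝ≥0∞ :=
  ⨅ (x : ℕ → ℓ2) (y : ℕ → ℓ2) (_ : ∀ i j : ℕ, φ (i + j) = inner ℂ (x i) (y j)),
    (⨆ i, (‖x i‖₊ : ℝ≥0∞)) * ⨆ j, (‖y j‖₊ : ℝ≥0∞)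

/-- The `M₃(ℕ)` norm of `φ : ℕ → ℂ`: the infimum of
`(sup_i ‖ξ_i‖)·(sup_k ‖T_k‖)·(sup_j ‖η_j‖)` over all sequences `ξ, η` in `ℓ²(ℕ)`
and operators `T_k` on `ℓ²(ℕ)` with `φ(i+k+j) = ⟨ξ_i, T_k η_j⟩` for all `i, k, j`. -/
def M3 (φ : ℕ → ℂ) : ℝ≥0∞ :=
  ⨅ (ξ : ℕ → ℓ2) (T : ℕ → ℓ2 →L[ℂ] ℓ2) (η : ℕ → ℓ2)
    (_ : ∀ i k j : ℕ, φ (i + k + j) = inner ℂ (ξ i) (T k (η j))),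
    ((⨆ i, (‖ξ i‖₊ : ℝ≥0∞)) * ⨆ k, (‖T k‖₊ : ℝ≥0∞)) * ⨆ j, (‖η j‖₊ : ℝ≥0∞)

/-- Normalized integral over the unit circle `𝕋`, parametrized by `θ ↦ e^{iθ}`,
i.e. `∫_𝕋 f dm` with `m` the normalized Haar (Lebesgue) measure. -/
def circInt (f : ℝ → ℝ) : ℝ := (∫ θ in (0:ℝ)..(2 * Real.pi), f θ) / (2 * Real.pi)

/-- Normalized lower (Lebesgue) integral over the unit circle `𝕋`,
parametrized by `θ ↦ e^{iθ}`. -/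
def circLInt (f : ℝ → ℝ≥0∞) : ℝ≥0∞ :=
  (∫⁻ θ in Set.Ioc (0:ℝ) (2 * Real.pi), f θ) / ENNReal.ofReal (2 * Real.pi)

open scoped ComplexConjugate NNReal

def FX (φ : ℕ → ℂ) (a c : ℝ) (i m : ℕ) : ℂ :=
  if m = 3*i then (a:ℂ)
  else if m % 3 = 1 ∧ m < 3*i then (a:ℂ)⁻¹ * conj (φ (i + (m-1)/3))
  else if m = 2 ∧ i = 0 then (c:ℂ) else 0

def FY (φ : ℕ → ℂ) (a c : ℝ) (j m : ℕ) : ℂ :=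
  if m % 3 = 0 ∧ m ≤ 3*j ∧ 1 ≤ j then (a:ℂ)⁻¹ * φ (j + m/3)
  else if m = 3*j+1 then (a:ℂ)
  else if m = 2 ∧ j = 0 then (φ 0 / (c:ℂ)) else 0

lemma FX_zero (φ : ℕ → ℂ) (a c : ℝ) (i m : ℕ) (h : 3*i+3 ≤ m) : FX φ a c i m = 0 := by
  unfold FX; split_ifs <;> first | rfl | (exfalso; omega)

lemma FY_zero (φ : ℕ → ℂ) (a c : ℝ) (j m : ℕ) (h : 3*j+3 ≤ m) : FY φ a c j m = 0 := by
  unfold FY; split_ifs <;> first | rfl | (exfalso; omega)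

lemma key1 (φ : ℕ → ℂ) (a c : ℝ)
    (ha : ∀ n, 1 ≤ n → ((a:ℂ) * (a:ℂ)⁻¹) * φ n = φ n)
    (hc : (c:ℂ) * (φ 0 / (c:ℂ)) = φ 0) (i j m : ℕ) :
    conj (FX φ a c i m) * FY φ a c j m =
      if (m = 3*i ∧ i ≤ j ∧ 1 ≤ j) ∨ (m = 3*j+1 ∧ j < i) ∨ (m = 2 ∧ i = 0 ∧ j = 0)
      then φ (i + j) else 0 := by
  unfold FX FY
  rcases lt_or_ge j i with hji | hij
  · -- case j < i : condition ↔ m = 3*j+1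
    have hiff : ((m = 3*i ∧ i ≤ j ∧ 1 ≤ j) ∨ (m = 3*j+1 ∧ j < i) ∨ (m = 2 ∧ i = 0 ∧ j = 0))
        ↔ m = 3*j+1 := by omega
    simp only [hiff]
    split_ifs <;>
      first
        | (exfalso; omega)
        | (rw [show i + (m-1)/3 = i + j by omega]
           simp only [map_mul, map_inv₀, Complex.conj_ofReal, Complex.conj_conj]
           rw [mul_comm, ← mul_assoc]
           exact ha _ (by omega))
        | simp
  · rcases Nat.lt_or_ge j 1 with hj0 | hj1
    · -- j = 0 and i ≤ j so i = 0 : condition ↔ m = 2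
      have hi0 : i = 0 := by omega
      have hj0' : j = 0 := by omega
      have hiff : ((m = 3*i ∧ i ≤ j ∧ 1 ≤ j) ∨ (m = 3*j+1 ∧ j < i) ∨ (m = 2 ∧ i = 0 ∧ j = 0))
          ↔ m = 2 := by omega
      simp only [hiff]
      split_ifs <;>
        first
          | (exfalso; omega)
          | (rw [Complex.conj_ofReal, hi0, hj0']; simpa using hc)
          | simp
    · -- i ≤ j, 1 ≤ j : condition ↔ m = 3*i
      have hiff : ((m = 3*i ∧ i ≤ j ∧ 1 ≤ j) ∨ (m = 3*j+1 ∧ j < i) ∨ (m = 2 ∧ i = 0 ∧ j = 0))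
          ↔ m = 3*i := by omega
      simp only [hiff]
      split_ifs <;>
        first
          | (exfalso; omega)
          | (rw [show j + m/3 = i + j by omega, Complex.conj_ofReal, ← mul_assoc]
             exact ha _ (by omega))
          | simp

lemma key2 (φ : ℕ → ℂ) (i j : ℕ) :
    (∑ m ∈ Finset.range (3*i+3*j+6),
      if (m = 3*i ∧ i ≤ j ∧ 1 ≤ j) ∨ (m = 3*j+1 ∧ j < i) ∨ (m = 2 ∧ i = 0 ∧ j = 0)
      then φ (i + j) else 0) = φ (i + j) := by
  rcases lt_or_ge j i with hji | hij
  · have hiff : ∀ m : ℕ, ((m = 3*i ∧ i ≤ j ∧ 1 ≤ j) ∨ (m = 3*j+1 ∧ j < i) ∨ (m = 2 ∧ i = 0 ∧ j = 0))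
        ↔ m = 3*j+1 := fun m => by omega
    simp only [hiff]
    rw [Finset.sum_ite_eq' (Finset.range (3*i+3*j+6)) (3*j+1) (fun _ => φ (i+j)),
      if_pos (by simp only [Finset.mem_range]; omega)]
  · rcases Nat.lt_or_ge j 1 with hj0 | hj1
    · have hiff : ∀ m : ℕ, ((m = 3*i ∧ i ≤ j ∧ 1 ≤ j) ∨ (m = 3*j+1 ∧ j < i) ∨ (m = 2 ∧ i = 0 ∧ j = 0))
          ↔ m = 2 := fun m => by omega
      simp only [hiff]
      rw [Finset.sum_ite_eq' (Finset.range (3*i+3*j+6)) 2 (fun _ => φ (i+j)),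
        if_pos (by simp only [Finset.mem_range]; omega)]
    · have hiff : ∀ m : ℕ, ((m = 3*i ∧ i ≤ j ∧ 1 ≤ j) ∨ (m = 3*j+1 ∧ j < i) ∨ (m = 2 ∧ i = 0 ∧ j = 0))
          ↔ m = 3*i := fun m => by omega
      simp only [hiff]
      rw [Finset.sum_ite_eq' (Finset.range (3*i+3*j+6)) (3*i) (fun _ => φ (i+j)),
        if_pos (by simp only [Finset.mem_range]; omega)]

lemma FX_bound (φ : ℕ → ℂ) (a c : ℝ) (ha0 : 0 ≤ a) (hc0 : 0 ≤ c) (i m : ℕ) :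
    ‖FX φ a c i m‖^2 ≤ (if m = 3*i then a^2 else 0)
      + (if m % 3 = 1 ∧ m < 3*i then (a⁻¹)^2 * ‖φ (i + (m-1)/3)‖^2 else 0)
      + (if m = 2 then c^2 else 0) := by
  unfold FX
  split_ifs <;>
    simp only [norm_mul, norm_inv, Complex.norm_real, Real.norm_eq_abs, norm_zero, mul_pow,
      RCLike.norm_conj, sq_abs, abs_of_nonneg ha0, abs_of_nonneg hc0, abs_inv] <;>
    first
      | (exfalso; omega)
      | positivity
      | nlinarith [sq_nonneg a, sq_nonneg c, sq_nonneg a⁻¹, norm_nonneg (φ (i + (m-1)/3)),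
          sq_nonneg (‖φ (i + (m-1)/3)‖)]

lemma FY_bound (φ : ℕ → ℂ) (a c : ℝ) (ha0 : 0 ≤ a) (hc2 : c^2 = ‖φ 0‖) (j m : ℕ) :
    ‖FY φ a c j m‖^2 ≤ (if m % 3 = 0 ∧ m ≤ 3*j ∧ 1 ≤ j then (a⁻¹)^2 * ‖φ (j + m/3)‖^2 else 0)
      + (if m = 3*j+1 then a^2 else 0)
      + (if m = 2 then ‖φ 0‖ else 0) := by
  have hdiv : ‖φ 0 / (c:ℂ)‖^2 ≤ ‖φ 0‖ := by
    rw [norm_div, div_pow, Complex.norm_real, Real.norm_eq_abs, sq_abs, hc2]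
    rcases eq_or_ne ‖φ 0‖ 0 with h | h
    · simp [h]
    · rw [sq, mul_div_assoc, div_self h, mul_one]
  unfold FY
  split_ifs <;>
    first
      | (exfalso; omega)
      | (simpa using hdiv)
      | (simp only [norm_mul, norm_inv, Complex.norm_real, Real.norm_eq_abs, norm_zero, mul_pow,
          sq_abs, abs_of_nonneg ha0, abs_inv]
         first
           | positivity
           | nlinarith [sq_nonneg a, norm_nonneg (φ (j + m/3)), sq_nonneg (‖φ (j + m/3)‖),
               norm_nonneg (φ 0)])

lemma sumFX (φ : ℕ → ℂ) (a c : ℝ) (ha0 : 0 ≤ a) (hc0 : 0 ≤ c) (i : ℕ) :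
    ∑ m ∈ Finset.range (3*i+3), ‖FX φ a c i m‖^2
      ≤ a^2 + (a⁻¹)^2 * (∑ k ∈ Finset.range i, ‖φ (i+k)‖^2) + c^2 := by
  calc ∑ m ∈ Finset.range (3*i+3), ‖FX φ a c i m‖^2
      ≤ ∑ m ∈ Finset.range (3*i+3), ((if m = 3*i then a^2 else 0)
        + (if m % 3 = 1 ∧ m < 3*i then (a⁻¹)^2 * ‖φ (i + (m-1)/3)‖^2 else 0)
        + (if m = 2 then c^2 else 0)) :=
        Finset.sum_le_sum fun m _ => FX_bound φ a c ha0 hc0 i m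
    _ = (∑ m ∈ Finset.range (3*i+3), (if m = 3*i then a^2 else 0))
        + (∑ m ∈ Finset.range (3*i+3),
            (if m % 3 = 1 ∧ m < 3*i then (a⁻¹)^2 * ‖φ (i + (m-1)/3)‖^2 else 0))
        + (∑ m ∈ Finset.range (3*i+3), (if m = 2 then c^2 else 0)) := by
        rw [Finset.sum_add_distrib, Finset.sum_add_distrib]
    _ ≤ a^2 + (a⁻¹)^2 * (∑ k ∈ Finset.range i, ‖φ (i+k)‖^2) + c^2 := by
        have e1 : (∑ m ∈ Finset.range (3*i+3), (if m = 3*i then a^2 else 0)) = a^2 := by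
          rw [Finset.sum_ite_eq' (Finset.range (3*i+3)) (3*i) (fun _ => a^2),
            if_pos (by simp only [Finset.mem_range]; omega)]
        have e2 : (∑ m ∈ Finset.range (3*i+3),
            (if m % 3 = 1 ∧ m < 3*i then (a⁻¹)^2 * ‖φ (i + (m-1)/3)‖^2 else 0))
            = (a⁻¹)^2 * (∑ k ∈ Finset.range i, ‖φ (i+k)‖^2) := by
          rw [← Finset.sum_filter]
          have himg : (Finset.range (3*i+3)).filter (fun m => m % 3 = 1 ∧ m < 3*i)
              = (Finset.range i).image (fun k => 3*k+1) := by
            ext m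
            simp only [Finset.mem_filter, Finset.mem_range, Finset.mem_image]
            constructor
            · rintro ⟨h1, h2, h3⟩; exact ⟨(m-1)/3, by omega, by omega⟩
            · rintro ⟨k, hk, rfl⟩; omega
          rw [himg, Finset.sum_image (fun x _ y _ h => by omega), Finset.mul_sum]
          refine Finset.sum_congr rfl fun k _ => ?_
          rw [show (3*k+1-1)/3 = k by omega]
        have e3 : (∑ m ∈ Finset.range (3*i+3), (if m = 2 then c^2 else 0)) ≤ c^2 := by
          rw [Finset.sum_ite_eq' (Finset.range (3*i+3)) 2 (fun _ => c^2)]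
          split_ifs <;> first | exact le_rfl | positivity
        rw [e1, e2]; linarith

lemma sumFY (φ : ℕ → ℂ) (a c : ℝ) (ha0 : 0 ≤ a) (hc2 : c^2 = ‖φ 0‖) (j : ℕ) :
    ∑ m ∈ Finset.range (3*j+3), ‖FY φ a c j m‖^2
      ≤ (if 1 ≤ j then (a⁻¹)^2 * (∑ k ∈ Finset.range (j+1), ‖φ (j+k)‖^2) else 0)
        + a^2 + ‖φ 0‖ := by
  calc ∑ m ∈ Finset.range (3*j+3), ‖FY φ a c j m‖^2
      ≤ ∑ m ∈ Finset.range (3*j+3),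
          ((if m % 3 = 0 ∧ m ≤ 3*j ∧ 1 ≤ j then (a⁻¹)^2 * ‖φ (j + m/3)‖^2 else 0)
          + (if m = 3*j+1 then a^2 else 0)
          + (if m = 2 then ‖φ 0‖ else 0)) :=
        Finset.sum_le_sum fun m _ => FY_bound φ a c ha0 hc2 j m
    _ = (∑ m ∈ Finset.range (3*j+3),
          (if m % 3 = 0 ∧ m ≤ 3*j ∧ 1 ≤ j then (a⁻¹)^2 * ‖φ (j + m/3)‖^2 else 0))
        + (∑ m ∈ Finset.range (3*j+3), (if m = 3*j+1 then a^2 else 0))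
        + (∑ m ∈ Finset.range (3*j+3), (if m = 2 then ‖φ 0‖ else 0)) := by
        rw [Finset.sum_add_distrib, Finset.sum_add_distrib]
    _ ≤ (if 1 ≤ j then (a⁻¹)^2 * (∑ k ∈ Finset.range (j+1), ‖φ (j+k)‖^2) else 0)
        + a^2 + ‖φ 0‖ := by
        have e1 : (∑ m ∈ Finset.range (3*j+3),
            (if m % 3 = 0 ∧ m ≤ 3*j ∧ 1 ≤ j then (a⁻¹)^2 * ‖φ (j + m/3)‖^2 else 0))
            = (if 1 ≤ j then (a⁻¹)^2 * (∑ k ∈ Finset.range (j+1), ‖φ (j+k)‖^2) else 0) := by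
          by_cases hj : 1 ≤ j
          · rw [if_pos hj, ← Finset.sum_filter]
            have himg : (Finset.range (3*j+3)).filter (fun m => m % 3 = 0 ∧ m ≤ 3*j ∧ 1 ≤ j)
                = (Finset.range (j+1)).image (fun k => 3*k) := by
              ext m
              simp only [Finset.mem_filter, Finset.mem_range, Finset.mem_image]
              constructor
              · rintro ⟨h1, h2, h3, h4⟩; exact ⟨m/3, by omega, by omega⟩
              · rintro ⟨k, hk, rfl⟩; omega
            rw [himg, Finset.sum_image (fun x _ y _ h => by omega), Finset.mul_sum]
            refine Finset.sum_congr rfl fun k _ => ?_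
            rw [show 3*k/3 = k by omega]
          · rw [if_neg hj]
            exact Finset.sum_eq_zero fun m _ => if_neg (by omega)
        have e2 : (∑ m ∈ Finset.range (3*j+3), (if m = 3*j+1 then a^2 else 0)) = a^2 := by
          rw [Finset.sum_ite_eq' (Finset.range (3*j+3)) (3*j+1) (fun _ => a^2),
            if_pos (by simp only [Finset.mem_range]; omega)]
        have e3 : (∑ m ∈ Finset.range (3*j+3), (if m = 2 then ‖φ 0‖ else 0)) ≤ ‖φ 0‖ := by
          rw [Finset.sum_ite_eq' (Finset.range (3*j+3)) 2 (fun _ => ‖φ 0‖)]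
          split_ifs <;> first | exact le_rfl | positivity
        rw [e1, e2]; linarith

lemma dyadic (φ : ℕ → ℂ) (S : ℝ)
    (hblock : ∀ n : ℕ, (∑ m ∈ Finset.Ico (2^n) (2^(n+1)), ‖φ m‖^2) ≤ S^2)
    (i : ℕ) (hi : 1 ≤ i) :
    (∑ m ∈ Finset.Ico i (2*i+1), ‖φ m‖^2) ≤ 2*S^2 := by
  set n := Nat.log 2 i with hn
  have h1 : 2^n ≤ i := Nat.pow_log_le_self 2 (by omega)
  have h2 : i < 2^(n+1) := Nat.lt_pow_succ_log_self (by norm_num) i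
  have hpow : (2:ℕ)^(n+2) = 2*2^(n+1) := by ring
  have hsub : Finset.Ico i (2*i+1) ⊆ Finset.Ico (2^n) (2^(n+2)) :=
    Finset.Ico_subset_Ico h1 (by omega)
  calc (∑ m ∈ Finset.Ico i (2*i+1), ‖φ m‖^2)
      ≤ ∑ m ∈ Finset.Ico (2^n) (2^(n+2)), ‖φ m‖^2 :=
        Finset.sum_le_sum_of_subset_of_nonneg hsub (fun _ _ _ => by positivity)
    _ = (∑ m ∈ Finset.Ico (2^n) (2^(n+1)), ‖φ m‖^2)
        + ∑ m ∈ Finset.Ico (2^(n+1)) (2^(n+2)), ‖φ m‖^2 :=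
        (Finset.sum_Ico_consecutive _ (Nat.pow_le_pow_right (by norm_num) (by omega))
          (Nat.pow_le_pow_right (by norm_num) (by omega))).symm
    _ ≤ S^2 + S^2 := add_le_add (hblock n) (hblock (n+1))
    _ = 2*S^2 := by ring

lemma inv_sq_bound (a S : ℝ) (hS : 0 ≤ S) (ha2 : a^2 = Real.sqrt 2 * S)
    (x : ℝ) (hx : 0 ≤ x) (hxle : x ≤ 2*S^2) : (a⁻¹)^2 * x ≤ Real.sqrt 2 * S := by
  rcases eq_or_ne a 0 with h | h
  · rw [h]; simp; positivity
  · have hS2 : Real.sqrt 2 * Real.sqrt 2 = 2 := Real.mul_self_sqrt (by norm_num)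
    have h2 : (0:ℝ) < a^2 := by positivity
    have hSpos : 0 < S := by nlinarith [Real.sqrt_nonneg 2]
    calc (a⁻¹)^2 * x ≤ (a⁻¹)^2 * (2*S^2) := by
          exact mul_le_mul_of_nonneg_left hxle (by positivity)
      _ = Real.sqrt 2 * S := by
          rw [inv_pow, ha2, inv_mul_eq_iff_eq_mul₀ (by positivity)]
          nlinarith [hS2]

lemma lp_single_zero (m : ℕ) : (lp.single 2 m (0:ℂ) : ℓ2) = 0 := by
  simpa using lp.single_smul (𝕜 := ℂ) 2 m (1:ℂ) (0:ℂ)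

lemma sum_single_ext {s t : Finset ℕ} (hst : s ⊆ t) (F : ℕ → ℂ)
    (h : ∀ m ∈ t, m ∉ s → F m = 0) :
    (∑ m ∈ s, (lp.single 2 m (F m) : ℓ2)) = ∑ m ∈ t, (lp.single 2 m (F m) : ℓ2) :=
  Finset.sum_subset hst fun x hx hnx => by rw [h x hx hnx]; exact lp_single_zero x

lemma inner_sum_single (s : Finset ℕ) (F G : ℕ → ℂ) :
    (inner ℂ (∑ m ∈ s, lp.single 2 m (F m)) (∑ m ∈ s, lp.single 2 m (G m)) : ℂ)
      = ∑ m ∈ s, conj (F m) * G m := by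
  rw [sum_inner]
  refine Finset.sum_congr rfl fun m hm => ?_
  rw [lp.inner_single_left]
  rw [lp.coeFn_sum, Finset.sum_apply]
  simp [lp.coeFn_sum, Finset.sum_apply, lp.single_apply, Finset.sum_dite_eq', hm,
    RCLike.inner_apply]
  ring

lemma norm_sum_single_sq (s : Finset ℕ) (F : ℕ → ℂ) :
    ‖(Finset.sum s fun m => (lp.single 2 m (F m) : ℓ2))‖ = Real.sqrt (∑ m ∈ s, ‖F m‖^2) := by
  have h := lp.norm_sum_single (p := 2) (E := fun _ : ℕ => ℂ) (by norm_num) F s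
  rw [show ((2:ℝ≥0∞).toReal) = (2:ℝ) by norm_num] at h
  rw [show (2:ℝ) = ((2:ℕ):ℝ) by norm_num] at h
  simp only [Real.rpow_natCast] at h
  rw [← h, Real.sqrt_sq (norm_nonneg _)]

set_option maxHeartbeats 1000000 in
/-- Lemma 2.4: for every `φ : ℕ → ℂ`,
`‖φ‖_{M₂} ≤ 4·sup_n (Σ_{2ⁿ ≤ i < 2^{n+1}} |φ(i)|²)^{1/2} + |φ(0)|`
(the inequality being vacuous when the right-hand side is infinite). -/
theorem statement7 (φ : ℕ → ℂ) :
    M2 φ ≤ 4 * (⨆ n : ℕ, ENNReal.ofReal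
        (Real.sqrt (∑ i ∈ Finset.Ico (2 ^ n) (2 ^ (n + 1)), ‖φ i‖ ^ 2)))
      + (‖φ 0‖₊ : ℝ≥0∞) := by
  set T := ⨆ n : ℕ, ENNReal.ofReal
      (Real.sqrt (∑ i ∈ Finset.Ico (2 ^ n) (2 ^ (n + 1)), ‖φ i‖ ^ 2)) with hT
  rcases eq_or_ne T ⊤ with hTtop | hTtop
  · rw [hTtop]
    have h4 : (4:ℝ≥0∞) * ⊤ + (‖φ 0‖₊ : ℝ≥0∞) = ⊤ := by simp
    rw [h4]; exact le_top
  set S := T.toReal with hSdef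
  have hS0 : 0 ≤ S := ENNReal.toReal_nonneg
  have hTS : T = ENNReal.ofReal S := (ENNReal.ofReal_toReal hTtop).symm
  have hblock : ∀ n : ℕ, (∑ m ∈ Finset.Ico (2^n) (2^(n+1)), ‖φ m‖^2) ≤ S^2 := by
    intro n
    have h1 : ENNReal.ofReal (Real.sqrt (∑ m ∈ Finset.Ico (2^n) (2^(n+1)), ‖φ m‖^2)) ≤ T := by
      rw [hT]
      exact le_iSup (fun n : ℕ => ENNReal.ofReal
        (Real.sqrt (∑ i ∈ Finset.Ico (2 ^ n) (2 ^ (n + 1)), ‖φ i‖ ^ 2))) n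
    rw [hTS, ENNReal.ofReal_le_ofReal_iff hS0] at h1
    have hnn : (0:ℝ) ≤ ∑ m ∈ Finset.Ico (2^n) (2^(n+1)), ‖φ m‖^2 := by positivity
    nlinarith [Real.sq_sqrt hnn, Real.sqrt_nonneg (∑ m ∈ Finset.Ico (2^n) (2^(n+1)), ‖φ m‖^2)]
  clear_value T
  set a := Real.sqrt (Real.sqrt 2 * S) with hadef
  set c := Real.sqrt ‖φ 0‖ with hcdef
  have ha0 : 0 ≤ a := Real.sqrt_nonneg _
  have hc0 : 0 ≤ c := Real.sqrt_nonneg _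
  have ha2 : a^2 = Real.sqrt 2 * S := Real.sq_sqrt (by positivity)
  have hc2 : c^2 = ‖φ 0‖ := Real.sq_sqrt (norm_nonneg _)
  clear_value a c
  have hrange : ∀ i L : ℕ, 1 ≤ i → i + L ≤ 2*i+1 →
      (∑ k ∈ Finset.range L, ‖φ (i+k)‖^2) ≤ 2*S^2 := by
    intro i L hi hL
    have h := Finset.sum_Ico_eq_sum_range (f := fun m => ‖φ m‖^2) (m := i) (n := i+L)
    rw [show i + L - i = L by omega] at h
    rw [← h]
    exact le_trans (Finset.sum_le_sum_of_subset_of_nonneg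
      (Finset.Ico_subset_Ico le_rfl hL) fun _ _ _ => by positivity) (dyadic φ S hblock i hi)
  have haφ : ∀ n, 1 ≤ n → ((a:ℂ) * (a:ℂ)⁻¹) * φ n = φ n := by
    intro n hn
    rcases eq_or_ne a 0 with h | h
    · have hS0' : Real.sqrt 2 * S = 0 := by rw [← ha2, h]; ring
      have hSz : S = 0 := by
        have h2 : Real.sqrt 2 ≠ 0 := by positivity
        exact (mul_eq_zero.mp hS0').resolve_left h2
      have hφ : φ n = 0 := by
        have hsum := dyadic φ S hblock n hn
        have hmem : n ∈ Finset.Ico n (2*n+1) := by simp only [Finset.mem_Ico]; omega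
        have hle : ‖φ n‖^2 ≤ ∑ m ∈ Finset.Ico n (2*n+1), ‖φ m‖^2 :=
          Finset.single_le_sum (f := fun m => ‖φ m‖^2) (fun m _ => by positivity) hmem
        rw [hSz] at hsum
        have h1 : ‖φ n‖^2 ≤ 0 := by nlinarith
        have h2 : ‖φ n‖ = 0 := by nlinarith [norm_nonneg (φ n)]
        exact norm_eq_zero.mp h2
      rw [hφ]; ring
    · rw [mul_inv_cancel₀ (Complex.ofReal_ne_zero.mpr h), one_mul]
  have hcφ : (c:ℂ) * (φ 0 / (c:ℂ)) = φ 0 := by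
    rcases eq_or_ne c 0 with h | h
    · have h0 : ‖φ 0‖ = 0 := by rw [← hc2, h]; ring
      rw [norm_eq_zero.mp h0, h]; simp
    · have : (c:ℂ) ≠ 0 := Complex.ofReal_ne_zero.mpr h
      field_simp
  set X : ℕ → ℓ2 := fun i => ∑ m ∈ Finset.range (3*i+3), lp.single 2 m (FX φ a c i m)
    with hXdef
  set Y : ℕ → ℓ2 := fun j => ∑ m ∈ Finset.range (3*j+3), lp.single 2 m (FY φ a c j m)
    with hYdef
  have hfact : ∀ i j : ℕ, φ (i + j) = inner ℂ (X i) (Y j) := by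
    intro i j
    rw [hXdef, hYdef]
    simp only
    rw [sum_single_ext (show Finset.range (3*i+3) ⊆ Finset.range (3*i+3*j+6) from
          Finset.range_subset_range.mpr (by omega)) _ (fun m _ hm => FX_zero φ a c i m (by
          simp only [Finset.mem_range, not_lt] at hm; omega)),
      sum_single_ext (show Finset.range (3*j+3) ⊆ Finset.range (3*i+3*j+6) from
          Finset.range_subset_range.mpr (by omega)) _ (fun m _ hm => FY_zero φ a c j m (by
          simp only [Finset.mem_range, not_lt] at hm; omega)),
      inner_sum_single,
      Finset.sum_congr rfl (fun m _ => key1 φ a c haφ hcφ i j m), key2]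
  set B := Real.sqrt (Real.sqrt 2 * S + (Real.sqrt 2 * S + ‖φ 0‖)) with hBdef
  have hXB : ∀ i, ‖X i‖ ≤ B := by
    intro i
    rw [hXdef]
    simp only
    rw [norm_sum_single_sq]
    apply Real.sqrt_le_sqrt
    have h1 := sumFX φ a c ha0 hc0 i
    have h2 : (a⁻¹)^2 * (∑ k ∈ Finset.range i, ‖φ (i+k)‖^2) ≤ Real.sqrt 2 * S := by
      rcases Nat.eq_zero_or_pos i with h | h
      · subst h; simp; positivity
      · exact inv_sq_bound a S hS0 ha2 _ (by positivity) (hrange i i h (by omega))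
    rw [ha2, hc2] at h1
    linarith
  have hYB : ∀ j, ‖Y j‖ ≤ B := by
    intro j
    rw [hYdef]
    simp only
    rw [norm_sum_single_sq]
    apply Real.sqrt_le_sqrt
    have h1 := sumFY φ a c ha0 hc2 j
    have h2 : (if 1 ≤ j then (a⁻¹)^2 * (∑ k ∈ Finset.range (j+1), ‖φ (j+k)‖^2) else 0)
        ≤ Real.sqrt 2 * S := by
      split_ifs with h
      · exact inv_sq_bound a S hS0 ha2 _ (by positivity) (hrange j (j+1) h (by omega))
      · positivity
    rw [ha2] at h1
    linarith
  have hM : M2 φ ≤ (⨆ i, (‖X i‖₊ : ℝ≥0∞)) * ⨆ j, (‖Y j‖₊ : ℝ≥0∞) := by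
    unfold M2
    exact iInf_le_of_le X (iInf_le_of_le Y (iInf_le _ hfact))
  have hsupX : (⨆ i, (‖X i‖₊ : ℝ≥0∞)) ≤ ENNReal.ofReal B :=
    iSup_le fun i => by rw [show (‖X i‖₊ : ℝ≥0∞) = ENNReal.ofReal ‖X i‖ from (ofReal_norm _).symm]; exact ENNReal.ofReal_le_ofReal (hXB i)
  have hsupY : (⨆ j, (‖Y j‖₊ : ℝ≥0∞)) ≤ ENNReal.ofReal B :=
    iSup_le fun j => by rw [show (‖Y j‖₊ : ℝ≥0∞) = ENNReal.ofReal ‖Y j‖ from (ofReal_norm _).symm]; exact ENNReal.ofReal_le_ofReal (hYB j)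
  calc M2 φ ≤ (⨆ i, (‖X i‖₊ : ℝ≥0∞)) * ⨆ j, (‖Y j‖₊ : ℝ≥0∞) := hM
    _ ≤ ENNReal.ofReal B * ENNReal.ofReal B := mul_le_mul' hsupX hsupY
    _ = ENNReal.ofReal (Real.sqrt 2 * S + (Real.sqrt 2 * S + ‖φ 0‖)) := by
        rw [← ENNReal.ofReal_mul (Real.sqrt_nonneg _), hBdef,
          Real.mul_self_sqrt (by positivity)]
    _ ≤ ENNReal.ofReal (4 * S + ‖φ 0‖) := ENNReal.ofReal_le_ofReal (by
        nlinarith [Real.sq_sqrt (show (0:ℝ) ≤ 2 by norm_num), Real.sqrt_nonneg 2, hS0,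
          sq_nonneg (Real.sqrt 2 - 2)])
    _ = ENNReal.ofReal (4 * S) + ENNReal.ofReal ‖φ 0‖ :=
        ENNReal.ofReal_add (by positivity) (norm_nonneg _)
    _ = 4 * ENNReal.ofReal S + (‖φ 0‖₊ : ℝ≥0∞) := by
        rw [ENNReal.ofReal_mul (by norm_num), show ENNReal.ofReal ‖φ 0‖ = (‖φ 0‖₊ : ℝ≥0∞) from ofReal_norm _]
        norm_num
    _ = 4 * T + (‖φ 0‖₊ : ℝ≥0∞) := by rw [← hTS]

end
end

section
/- Let K ≥ 3 be an integer, and for each integer p with K/2 < p < K let F_p be an analytic trigonometric polynomial of degree ≤ 2^{K−1}. Define φ: ℕ → ℂ by φ(n) = F̂_p(n − 2^{2p}) whenever 2^{2p} ≤ n ≤ 2^{2p} + 2^{K−1} for some integer p with K/2 < p < K, and φ(n) = 0 for all other n (these ranges of n are pairwise disjoint, so φ is well defined; φ is the coefficient function of F = Σ_{K/2<p<K} z^{2^{2p}} F_p). Then ∫_𝕋 max_{K/2<p<K} |F_p(z)| dm(z) ≤ 3·‖φ‖_{M₃} (Lemma 2.5). -/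
open MeasureTheory
open scoped ENNReal

noncomputable section

open scoped NNReal

lemma exp_ortho {n : ℤ} (hn : n ≠ 0) :
    ∫ θ in (0:ℝ)..(2*Real.pi), Complex.exp ((n:ℂ) * θ * Complex.I) = 0 := by
  have hc : (n:ℂ) * Complex.I ≠ 0 :=
    mul_ne_zero (by exact_mod_cast hn) Complex.I_ne_zero
  have h1 : ∀ θ:ℝ, (n:ℂ) * θ * Complex.I = ((n:ℂ)*Complex.I) * (θ:ℂ) := by intro θ; ring
  simp_rw [h1]
  rw [integral_exp_mul_complex hc]
  have h2 : (n:ℂ) * Complex.I * (2*Real.pi:ℝ) = (n:ℂ) * (2 * Real.pi * Complex.I) := by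
    push_cast; ring
  rw [h2, Complex.exp_int_mul_two_pi_mul_I]
  simp

lemma ortho_sum (s : Finset ℕ) (a : ℕ → ℤ) (ha : Set.InjOn a s) (v : ℕ → ℓ2) :
    ∫ θ in (0:ℝ)..(2*Real.pi),
      (inner ℂ (∑ i ∈ s, Complex.exp ((a i:ℂ)*θ*Complex.I) • v i)
             (∑ i ∈ s, Complex.exp ((a i:ℂ)*θ*Complex.I) • v i) : ℂ)
    = (2*Real.pi:ℝ) * ∑ i ∈ s, ((‖v i‖:ℂ))^2 := by
  have expand : ∀ θ:ℝ,
      (inner ℂ (∑ i ∈ s, Complex.exp ((a i:ℂ)*θ*Complex.I) • v i)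
             (∑ i ∈ s, Complex.exp ((a i:ℂ)*θ*Complex.I) • v i) : ℂ)
      = ∑ i ∈ s, ∑ i' ∈ s,
          Complex.exp (((a i' - a i : ℤ):ℂ)*θ*Complex.I) * (inner ℂ (v i) (v i') : ℂ) := by
    intro θ
    rw [sum_inner]
    refine Finset.sum_congr rfl fun i hi => ?_
    rw [inner_sum]
    refine Finset.sum_congr rfl fun i' hi' => ?_
    rw [inner_smul_left, inner_smul_right, ← Complex.exp_conj]
    rw [← mul_assoc, ← Complex.exp_add]
    congr 2
    simp only [map_mul, Complex.conj_I, Complex.conj_ofReal, map_intCast]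
    push_cast
    ring
  simp_rw [expand]
  rw [intervalIntegral.integral_finset_sum]
  · have : ∀ i ∈ s, (∫ θ in (0:ℝ)..(2*Real.pi), ∑ i' ∈ s,
        Complex.exp (((a i' - a i : ℤ):ℂ)*θ*Complex.I) * (inner ℂ (v i) (v i') : ℂ))
        = (2*Real.pi:ℝ) * ((‖v i‖:ℂ))^2 := by
      intro i hi
      rw [intervalIntegral.integral_finset_sum]
      · rw [Finset.sum_eq_single_of_mem i hi]
        · simp only [sub_self, Int.cast_zero, zero_mul]
          rw [intervalIntegral.integral_mul_const]
          simp only [Complex.exp_zero]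
          rw [inner_self_eq_norm_sq_to_K]
          simp
        · intro i' hi' hne
          have hd : (a i' - a i : ℤ) ≠ 0 := by
            intro h
            exact hne (ha hi' hi (by omega))
          rw [intervalIntegral.integral_mul_const, exp_ortho hd, zero_mul]
      · intro i' _
        apply Continuous.intervalIntegrable
        fun_prop
    rw [Finset.sum_congr rfl this, ← Finset.mul_sum]
  · intro i _
    apply Continuous.intervalIntegrable
    apply continuous_finset_sum
    intro i' _
    fun_prop

lemma sq_cast (u : ℓ2) : ((‖u‖₊ : ℝ≥0∞))^(2:ℝ) = ENNReal.ofReal (‖u‖^2) := by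
  rw [ENNReal.ofReal_pow (norm_nonneg _), ← enorm_eq_nnnorm, ← ofReal_norm,
    ← ENNReal.rpow_natCast]
  norm_num

lemma lint_sq (s : Finset ℕ) (a : ℕ → ℤ) (ha : Set.InjOn a s) (v : ℕ → ℓ2) :
    (∫⁻ θ in Set.Ioc (0:ℝ) (2*Real.pi),
      ((‖∑ i ∈ s, Complex.exp ((a i:ℂ)*θ*Complex.I) • v i‖₊ : ℝ≥0∞))^(2:ℝ))
    ≤ ENNReal.ofReal (2*Real.pi) * s.card * (⨆ i : ℕ, (‖v i‖₊ : ℝ≥0∞))^(2:ℝ) := by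
  set w : ℝ → ℓ2 := fun θ => ∑ i ∈ s, Complex.exp ((a i:ℂ)*θ*Complex.I) • v i with hw
  have hcont : Continuous w := by
    apply continuous_finset_sum
    intro i _
    fun_prop
  simp_rw [sq_cast]
  have hint : IntegrableOn (fun θ => ‖w θ‖^2) (Set.Ioc (0:ℝ) (2*Real.pi)) := by
    apply Continuous.integrableOn_Ioc
    fun_prop
  rw [← ofReal_integral_eq_lintegral_ofReal hint]
  · have hle : (0:ℝ) ≤ 2*Real.pi := by positivity
    have hIoc : ∫ θ in Set.Ioc (0:ℝ) (2*Real.pi), ‖w θ‖^2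
        = ∫ θ in (0:ℝ)..(2*Real.pi), ‖w θ‖^2 := by
      rw [intervalIntegral.integral_of_le hle]
    have hval : (∫ θ in (0:ℝ)..(2*Real.pi), ‖w θ‖^2) = (2*Real.pi) * ∑ i ∈ s, ‖v i‖^2 := by
      have hos := ortho_sum s a ha v
      have h2 : ∀ θ:ℝ, (inner ℂ (w θ) (w θ) : ℂ) = ((‖w θ‖^2 : ℝ) : ℂ) := by
        intro θ; rw [inner_self_eq_norm_sq_to_K]; norm_cast
      rw [show (fun θ:ℝ => (inner ℂ (w θ) (w θ) : ℂ)) = (fun θ:ℝ => ((‖w θ‖^2 : ℝ) : ℂ)) from funext h2] at hos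
      rw [intervalIntegral.integral_ofReal] at hos
      have : ((∫ θ in (0:ℝ)..(2*Real.pi), ‖w θ‖^2 : ℝ) : ℂ)
          = (((2*Real.pi) * ∑ i ∈ s, ‖v i‖^2 : ℝ) : ℂ) := by
        rw [hos]; push_cast; ring
      exact_mod_cast this
    rw [hIoc, hval]
    rw [ENNReal.ofReal_mul (by positivity), mul_assoc]
    refine mul_le_mul_right ?_ _
    calc ENNReal.ofReal (∑ i ∈ s, ‖v i‖^2) ≤ ∑ i ∈ s, ENNReal.ofReal (‖v i‖^2) :=
          le_of_eq (ENNReal.ofReal_sum_of_nonneg (fun i _ => by positivity))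
      _ ≤ ∑ _i ∈ s, (⨆ i : ℕ, (‖v i‖₊ : ℝ≥0∞))^(2:ℝ) := by
          apply Finset.sum_le_sum
          intro i _
          rw [← sq_cast]
          exact ENNReal.rpow_le_rpow (le_iSup (fun i => ((‖v i‖₊:ℝ≥0∞))) i) (by norm_num)
      _ = s.card * (⨆ i : ℕ, (‖v i‖₊ : ℝ≥0∞))^(2:ℝ) := by
          rw [Finset.sum_const, nsmul_eq_mul]
  · filter_upwards with θ
    positivity

lemma vanish_arith (K N : ℕ) (hK : 3 ≤ K) (hN : N = 2^(K-1)) {p : ℕ} (hp1 : K < 2*p) (hp2 : p < K)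
    {t : ℕ} (ht4 : t ≤ 4*N) (htout : t < N ∨ 2*N < t) (p' : ℕ) (h1 : K < 2*p') (h2 : p' < K) :
    ¬(2^(2*p') ≤ 2^(2*p) - N + t ∧ 2^(2*p) - N + t ≤ 2^(2*p') + N) := by
  have h4N : ∀ q, K < 2*q → 4*N ≤ 2^(2*q) := by
    intro q hq
    have h1 : 2^(K+1) ≤ 2^(2*q) := Nat.pow_le_pow_right (by norm_num) (by omega)
    have e : 4*N = 2^(K+1) := by
      subst hN
      rw [show K+1 = (K-1)+2 by omega, pow_add]
      ring
    omega
  have hA := h4N p hp1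
  have hB := h4N p' h1
  rcases lt_trichotomy p p' with h | h | h
  · have : 4 * 2^(2*p) ≤ 2^(2*p') := by
      calc 4 * 2^(2*p) = 2^(2*p+2) := by rw [pow_add]; ring
        _ ≤ 2^(2*p') := Nat.pow_le_pow_right (by norm_num) (by omega)
    omega
  · subst h; omega
  · have : 4 * 2^(2*p') ≤ 2^(2*p) := by
      calc 4 * 2^(2*p') = 2^(2*p'+2) := by rw [pow_add]; ring
        _ ≤ 2^(2*p) := Nat.pow_le_pow_right (by norm_num) (by omega)
    omega

lemma key_id (K N : ℕ) (hK : 3 ≤ K) (hN : N = 2^(K-1)) (φ : ℕ → ℂ) (F : ℕ → ℕ → ℂ)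
    (hφ1 : ∀ p, K < 2 * p → p < K → ∀ j ≤ 2 ^ (K - 1), φ (2 ^ (2 * p) + j) = F p j)
    (hφ2 : ∀ n, (∀ p, K < 2 * p → p < K →
        ¬(2 ^ (2 * p) ≤ n ∧ n ≤ 2 ^ (2 * p) + 2 ^ (K - 1))) → φ n = 0)
    (ξ η : ℕ → ℓ2) (T : ℕ → ℓ2 →L[ℂ] ℓ2)
    (hrep : ∀ i k j : ℕ, φ (i + k + j) = inner ℂ (ξ i) (T k (η j)))
    (p : ℕ) (hp1 : K < 2*p) (hp2 : p < K) (θ : ℝ) :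
    (inner ℂ (∑ i ∈ Finset.range (N+1), Complex.exp (((-(i:ℤ) : ℤ):ℂ)*θ*Complex.I) • ξ i)
      (T (2^(2*p) - N)
        (∑ j ∈ Finset.range (3*N+1), Complex.exp ((((j:ℤ) : ℤ):ℂ)*θ*Complex.I) • η j)) : ℂ)
    = ((N:ℂ)+1) * Complex.exp ((N:ℂ)*θ*Complex.I) *
        ∑ m ∈ Finset.range (N+1), F p m * Complex.exp ((m:ℂ)*θ*Complex.I) := by
  have h4N : 4*N ≤ 2^(2*p) := by
    have h1 : 2^(K+1) ≤ 2^(2*p) := Nat.pow_le_pow_right (by norm_num) (by omega)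
    have e : 4*N = 2^(K+1) := by
      subst hN; rw [show K+1 = (K-1)+2 by omega, pow_add]; ring
    omega
  set κ : ℕ := 2^(2*p) - N with hκ
  rw [map_sum, sum_inner]
  have hout : ∀ i ∈ Finset.range (N+1),
      (inner ℂ (Complex.exp (((-(i:ℤ) : ℤ):ℂ)*θ*Complex.I) • ξ i)
        (∑ j ∈ Finset.range (3*N+1), T κ (Complex.exp ((((j:ℤ) : ℤ):ℂ)*θ*Complex.I) • η j)) : ℂ)
      = Complex.exp ((N:ℂ)*θ*Complex.I) *
          ∑ m ∈ Finset.range (N+1), F p m * Complex.exp ((m:ℂ)*θ*Complex.I) := by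
    intro i hi
    have hiN : i ≤ N := by simpa using Nat.lt_succ_iff.mp (Finset.mem_range.mp hi)
    rw [inner_sum]
    have hconj : (starRingEnd ℂ) (Complex.exp (((-(i:ℤ) : ℤ):ℂ)*θ*Complex.I))
        = Complex.exp ((i:ℂ)*θ*Complex.I) := by
      rw [← Complex.exp_conj]
      congr 1
      simp only [map_mul, Complex.conj_I, Complex.conj_ofReal, map_intCast]
      push_cast
      ring
    have hterm : ∀ j ∈ Finset.range (3*N+1),
        (inner ℂ (Complex.exp (((-(i:ℤ) : ℤ):ℂ)*θ*Complex.I) • ξ i)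
           (T κ (Complex.exp ((((j:ℤ) : ℤ):ℂ)*θ*Complex.I) • η j)) : ℂ)
        = Complex.exp (((i+j : ℕ):ℂ)*θ*Complex.I) * φ (i + κ + j) := by
      intro j hj
      rw [_root_.map_smul, inner_smul_right, inner_smul_left, hconj, ← hrep i κ j]
      push_cast
      rw [show ((i:ℂ)+j)*θ*Complex.I = (i:ℂ)*θ*Complex.I + (j:ℂ)*θ*Complex.I from by ring,
        Complex.exp_add]
      ring
    rw [Finset.sum_congr rfl hterm]
    -- restrict sum to Icc (N-i) (2N-i)
    have hsub : Finset.Icc (N-i) (2*N-i) ⊆ Finset.range (3*N+1) := by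
      intro j hj
      rw [Finset.mem_Icc] at hj
      rw [Finset.mem_range]
      omega
    have hvan : ∀ j ∈ Finset.range (3*N+1), j ∉ Finset.Icc (N-i) (2*N-i) →
        Complex.exp (((i+j : ℕ):ℂ)*θ*Complex.I) * φ (i + κ + j) = 0 := by
      intro j hj hnj
      rw [Finset.mem_range] at hj
      rw [Finset.mem_Icc, not_and_or] at hnj
      have hφz : φ (i + κ + j) = 0 := by
        have hn : i + κ + j = 2^(2*p) - N + (i + j) := by omega
        rw [hn]
        apply hφ2
        have htout : i + j < N ∨ 2*N < i + j := by omega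
        intro p' h1 h2
        rw [← hN]
        exact vanish_arith K N hK hN hp1 hp2 (by omega) htout p' h1 h2
      rw [hφz, mul_zero]
    rw [← Finset.sum_subset hsub hvan]
    have hIcc : Finset.Icc (N-i) (2*N-i) = Finset.Ico (N-i) (2*N-i+1) := by
      rw [Finset.Ico_add_one_right_eq_Icc]
    rw [hIcc, Finset.sum_Ico_eq_sum_range]
    have hcard : 2*N-i+1 - (N-i) = N+1 := by omega
    rw [hcard]
    rw [Finset.mul_sum]
    refine Finset.sum_congr rfl fun m hm => ?_
    have hmN : m ≤ N := by
      rw [Finset.mem_range] at hm; omega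
    have hidx : i + (N - i + m) = N + m := by omega
    have hidx2 : i + κ + (N - i + m) = 2^(2*p) + m := by omega
    rw [hidx, hidx2]
    have hφv : φ (2^(2*p) + m) = F p m := by
      apply hφ1 p hp1 hp2 m
      omega
    rw [hφv]
    push_cast
    rw [show ((N:ℂ)+m)*θ*Complex.I = (N:ℂ)*θ*Complex.I + (m:ℂ)*θ*Complex.I from by ring,
      Complex.exp_add]
    ring
  rw [Finset.sum_congr rfl hout, Finset.sum_const, Finset.card_range]
  rw [nsmul_eq_mul]
  push_cast
  ring

lemma pointwise_bound (K N : ℕ) (hK : 3 ≤ K) (hN : N = 2^(K-1)) (φ : ℕ → ℂ) (F : ℕ → ℕ → ℂ)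
    (hφ1 : ∀ p, K < 2 * p → p < K → ∀ j ≤ 2 ^ (K - 1), φ (2 ^ (2 * p) + j) = F p j)
    (hφ2 : ∀ n, (∀ p, K < 2 * p → p < K →
        ¬(2 ^ (2 * p) ≤ n ∧ n ≤ 2 ^ (2 * p) + 2 ^ (K - 1))) → φ n = 0)
    (ξ η : ℕ → ℓ2) (T : ℕ → ℓ2 →L[ℂ] ℓ2)
    (hrep : ∀ i k j : ℕ, φ (i + k + j) = inner ℂ (ξ i) (T k (η j)))
    (p : ℕ) (hp1 : K < 2*p) (hp2 : p < K) (θ : ℝ) :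
    ((N+1:ℕ):ℝ≥0∞) *
        ‖∑ m ∈ Finset.range (N+1), F p m * Complex.exp ((m:ℂ)*θ*Complex.I)‖₊
      ≤ (‖∑ i ∈ Finset.range (N+1), Complex.exp (((-(i:ℤ) : ℤ):ℂ)*θ*Complex.I) • ξ i‖₊ : ℝ≥0∞)
        * ((⨆ k, (‖T k‖₊ : ℝ≥0∞)) *
           ‖∑ j ∈ Finset.range (3*N+1), Complex.exp ((((j:ℤ) : ℤ):ℂ)*θ*Complex.I) • η j‖₊) := by
  set x : ℓ2 := ∑ i ∈ Finset.range (N+1), Complex.exp (((-(i:ℤ) : ℤ):ℂ)*θ*Complex.I) • ξ i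
  set y : ℓ2 := ∑ j ∈ Finset.range (3*N+1), Complex.exp ((((j:ℤ) : ℤ):ℂ)*θ*Complex.I) • η j
  have hid := key_id K N hK hN φ F hφ1 hφ2 ξ η T hrep p hp1 hp2 θ
  have hexp1 : ‖Complex.exp ((N:ℂ)*θ*Complex.I)‖₊ = 1 := by
    have h : ((N:ℂ)*θ*Complex.I) = (((N*θ:ℝ)):ℂ)*Complex.I := by push_cast; ring
    apply NNReal.coe_injective
    rw [coe_nnnorm, NNReal.coe_one, h]
    exact Complex.norm_exp_ofReal_mul_I _
  have hnn : ((N+1:ℕ):ℝ≥0) *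
      ‖∑ m ∈ Finset.range (N+1), F p m * Complex.exp ((m:ℂ)*θ*Complex.I)‖₊
      = ‖(inner ℂ x (T (2^(2*p) - N) y) : ℂ)‖₊ := by
    rw [hid, nnnorm_mul, nnnorm_mul, hexp1, mul_one]
    congr 1
    have hc : ((N:ℂ)+1) = ((N+1:ℕ):ℂ) := by push_cast; ring
    rw [hc]
    apply NNReal.coe_injective
    rw [coe_nnnorm, Complex.norm_natCast]
    push_cast
    ring
  have hb : (‖(inner ℂ x (T (2^(2*p) - N) y) : ℂ)‖₊ : ℝ≥0∞) ≤
      (‖x‖₊ : ℝ≥0∞) * ((⨆ k, (‖T k‖₊ : ℝ≥0∞)) * ‖y‖₊) := by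
    calc (‖(inner ℂ x (T (2^(2*p) - N) y) : ℂ)‖₊ : ℝ≥0∞)
        ≤ (‖x‖₊ : ℝ≥0∞) * ‖T (2^(2*p) - N) y‖₊ := by
          exact_mod_cast ENNReal.coe_le_coe.mpr (nnnorm_inner_le_nnnorm x _)
      _ ≤ (‖x‖₊ : ℝ≥0∞) * ((‖T (2^(2*p) - N)‖₊ : ℝ≥0∞) * ‖y‖₊) := by
          refine mul_le_mul_right ?_ _
          exact_mod_cast ENNReal.coe_le_coe.mpr ((T (2^(2*p) - N)).le_opNNNorm y)
      _ ≤ (‖x‖₊ : ℝ≥0∞) * ((⨆ k, (‖T k‖₊ : ℝ≥0∞)) * ‖y‖₊) := by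
          refine mul_le_mul_right (mul_le_mul_left ?_ _) _
          exact le_iSup (fun k => (‖T k‖₊ : ℝ≥0∞)) _
  calc ((N+1:ℕ):ℝ≥0∞) * ‖∑ m ∈ Finset.range (N+1), F p m * Complex.exp ((m:ℂ)*θ*Complex.I)‖₊
      = (‖(inner ℂ x (T (2^(2*p) - N) y) : ℂ)‖₊ : ℝ≥0∞) := by
        rw [← hnn]; push_cast; ring
    _ ≤ _ := hb

/-- Lemma 2.5: let `K ≥ 3` and for each `p` with `K/2 < p < K` let `F_p` be an
analytic trigonometric polynomial of degree `≤ 2^{K-1}` (given by its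
coefficients `F p j`, `0 ≤ j ≤ 2^{K-1}`). If `φ` is the coefficient function of
`F = Σ_{K/2 < p < K} z^{2^{2p}} F_p`, then
`∫_𝕋 max_{K/2 < p < K} |F_p| dm ≤ 3·‖φ‖_{M₃}`. -/
theorem statement8 (K : ℕ) (hK : 3 ≤ K) (F : ℕ → ℕ → ℂ) (φ : ℕ → ℂ)
    (hφ1 : ∀ p, K < 2 * p → p < K → ∀ j ≤ 2 ^ (K - 1), φ (2 ^ (2 * p) + j) = F p j)
    (hφ2 : ∀ n, (∀ p, K < 2 * p → p < K →
        ¬(2 ^ (2 * p) ≤ n ∧ n ≤ 2 ^ (2 * p) + 2 ^ (K - 1))) → φ n = 0) :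
    circLInt (fun θ => ⨆ (p : ℕ) (_ : K < 2 * p) (_ : p < K),
        (‖∑ j ∈ Finset.range (2 ^ (K - 1) + 1),
            F p j * Complex.exp ((j : ℂ) * (θ : ℂ) * Complex.I)‖₊ : ℝ≥0∞))
      ≤ 3 * M3 φ := by
  have h30 : (3:ℝ≥0∞) ≠ 0 := by norm_num
  have h3t : (3:ℝ≥0∞) ≠ ⊤ := by norm_num
  rw [M3, ENNReal.mul_iInf_of_ne h30 h3t]
  refine le_iInf fun ξ => ?_
  rw [ENNReal.mul_iInf_of_ne h30 h3t]
  refine le_iInf fun T => ?_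
  rw [ENNReal.mul_iInf_of_ne h30 h3t]
  refine le_iInf fun η => ?_
  rw [ENNReal.mul_iInf_of_ne h30 h3t]
  refine le_iInf fun hrep => ?_
  set N := 2^(K-1) with hN
  set sξ := ⨆ i, (‖ξ i‖₊ : ℝ≥0∞) with hsξ
  set sT := ⨆ k, (‖T k‖₊ : ℝ≥0∞) with hsT
  set sη := ⨆ j, (‖η j‖₊ : ℝ≥0∞) with hsη
  -- the polynomial coefficients rewritten in our normal form
  have hpoly : ∀ (p : ℕ) (θ : ℝ), (∑ j ∈ Finset.range (N + 1),
      F p j * Complex.exp ((j : ℂ) * (θ : ℂ) * Complex.I))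
      = ∑ m ∈ Finset.range (N+1), F p m * Complex.exp ((m:ℂ)*θ*Complex.I) := by
    intro p θ; rfl
  by_cases hzero : ∀ n, φ n = 0
  · -- degenerate: φ ≡ 0 hence every F p j (in range) is 0
    have hf : ∀ θ : ℝ, (⨆ (p : ℕ) (_ : K < 2 * p) (_ : p < K),
        (‖∑ j ∈ Finset.range (N + 1),
            F p j * Complex.exp ((j : ℂ) * (θ : ℂ) * Complex.I)‖₊ : ℝ≥0∞)) = 0 := by
      intro θ
      refine le_antisymm ?_ zero_le
      refine iSup_le fun p => iSup_le fun hp1 => iSup_le fun hp2 => ?_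
      have hFz : ∀ m ∈ Finset.range (N+1), F p m * Complex.exp ((m:ℂ)*(θ:ℂ)*Complex.I) = 0 := by
        intro m hm
        have : F p m = 0 := by
          rw [← hφ1 p hp1 hp2 m (Nat.lt_succ_iff.mp (Finset.mem_range.mp hm))]
          exact hzero _
        rw [this, zero_mul]
      rw [Finset.sum_eq_zero hFz]
      simp
    unfold circLInt
    simp only [hf]
    simp [lintegral_zero, ENNReal.zero_div]
  · push_neg at hzero
    obtain ⟨n₀, hn₀⟩ := hzero
    have hξ0 : sξ ≠ 0 := by
      intro h
      apply hn₀
      have hz : ξ n₀ = 0 := by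
        have hle := le_iSup (fun i => (‖ξ i‖₊ : ℝ≥0∞)) n₀
        rw [← hsξ, h, le_zero_iff] at hle
        simpa using hle
      have := hrep n₀ 0 0
      simpa [hz] using this
    have hT0 : sT ≠ 0 := by
      intro h
      apply hn₀
      have hz : T 0 = 0 := by
        have hle := le_iSup (fun k => (‖T k‖₊ : ℝ≥0∞)) 0
        rw [← hsT, h, le_zero_iff] at hle
        simpa using hle
      have := hrep n₀ 0 0
      simpa [hz] using this
    have hη0 : sη ≠ 0 := by
      intro h
      apply hn₀
      have hz : η 0 = 0 := by
        have hle := le_iSup (fun j => (‖η j‖₊ : ℝ≥0∞)) 0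
        rw [← hsη, h, le_zero_iff] at hle
        simpa using hle
      have := hrep n₀ 0 0
      simpa [hz] using this
    by_cases htop : sξ = ⊤ ∨ sT = ⊤ ∨ sη = ⊤
    · have : 3 * ((sξ * sT) * sη) = ⊤ := by
        rcases htop with h | h | h <;>
          simp [h, ENNReal.mul_top, ENNReal.top_mul, ENNReal.mul_eq_top, hξ0, hT0, hη0,
            mul_eq_zero]
      rw [this]
      exact le_top
    · push_neg at htop
      obtain ⟨hξt, hTt, hηt⟩ := htop
      -- main estimate
      set x : ℝ → ℓ2 := fun θ =>
        ∑ i ∈ Finset.range (N+1), Complex.exp ((((fun i => -(i:ℤ)) i : ℤ):ℂ)*θ*Complex.I) • ξ i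
        with hx
      set y : ℝ → ℓ2 := fun θ =>
        ∑ j ∈ Finset.range (3*N+1), Complex.exp ((((fun j => (j:ℤ)) j : ℤ):ℂ)*θ*Complex.I) • η j
        with hy
      have hcx : Continuous x := by
        apply continuous_finset_sum; intro i _; fun_prop
      have hcy : Continuous y := by
        apply continuous_finset_sum; intro j _; fun_prop
      have hmx : AEMeasurable (fun θ => (‖x θ‖₊ : ℝ≥0∞))
          (volume.restrict (Set.Ioc (0:ℝ) (2*Real.pi))) :=
        (ENNReal.continuous_coe.comp hcx.nnnorm).measurable.aemeasurable
      have hmy : AEMeasurable (fun θ => (‖y θ‖₊ : ℝ≥0∞))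
          (volume.restrict (Set.Ioc (0:ℝ) (2*Real.pi))) :=
        (ENNReal.continuous_coe.comp hcy.nnnorm).measurable.aemeasurable
      set c : ℝ≥0∞ := ((N+1:ℕ):ℝ≥0∞) with hc
      have hc0 : c ≠ 0 := by simp [hc]
      have hct : c ≠ ⊤ := by simp [hc]
      set u : ℝ≥0∞ := ENNReal.ofReal (2*Real.pi) with hu
      -- pointwise bound
      have hptw : ∀ θ : ℝ, c * (⨆ (p : ℕ) (_ : K < 2 * p) (_ : p < K),
          (‖∑ j ∈ Finset.range (N + 1),
              F p j * Complex.exp ((j : ℂ) * (θ : ℂ) * Complex.I)‖₊ : ℝ≥0∞))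
          ≤ sT * ((‖x θ‖₊ : ℝ≥0∞) * ‖y θ‖₊) := by
        intro θ
        rw [ENNReal.mul_iSup]
        refine iSup_le fun p => ?_
        rw [ENNReal.mul_iSup]
        refine iSup_le fun hp1 => ?_
        rw [ENNReal.mul_iSup]
        refine iSup_le fun hp2 => ?_
        have := pointwise_bound K N hK hN φ F hφ1 hφ2 ξ η T hrep p hp1 hp2 θ
        calc c * (‖∑ j ∈ Finset.range (N + 1),
              F p j * Complex.exp ((j : ℂ) * (θ : ℂ) * Complex.I)‖₊ : ℝ≥0∞)
            ≤ (‖x θ‖₊ : ℝ≥0∞) * (sT * ‖y θ‖₊) := this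
          _ = sT * ((‖x θ‖₊ : ℝ≥0∞) * ‖y θ‖₊) := by ring
      -- the two L² estimates
      have hells : Set.InjOn (fun i : ℕ => -(i:ℤ)) (Finset.range (N+1) : Set ℕ) := by
        intro a _ b _ h
        simp only [neg_inj, Int.natCast_inj] at h
        exact h
      have hells2 : Set.InjOn (fun j : ℕ => (j:ℤ)) (Finset.range (3*N+1) : Set ℕ) := by
        intro a _ b _ h
        simp only [Int.natCast_inj] at h
        exact h
      have hX := lint_sq (Finset.range (N+1)) (fun i => -(i:ℤ)) hells ξ
      have hY := lint_sq (Finset.range (3*N+1)) (fun j => (j:ℤ)) hells2 η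
      rw [Finset.card_range] at hX hY
      -- Hölder
      have hpq : Real.HolderConjugate 2 2 := Real.HolderConjugate.two_two
      have hHo := ENNReal.lintegral_mul_le_Lp_mul_Lq
        (volume.restrict (Set.Ioc (0:ℝ) (2*Real.pi))) hpq hmx hmy
      simp only [Pi.mul_apply] at hHo
      -- combine
      set A : ℝ≥0∞ := ∫⁻ θ in Set.Ioc (0:ℝ) (2*Real.pi), ((‖x θ‖₊:ℝ≥0∞))^(2:ℝ) with hA
      set B : ℝ≥0∞ := ∫⁻ θ in Set.Ioc (0:ℝ) (2*Real.pi), ((‖y θ‖₊:ℝ≥0∞))^(2:ℝ) with hB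
      have hsqrt : A^(1/2:ℝ) * B^(1/2:ℝ) ≤ u * ((3*(N+1):ℕ):ℝ≥0∞) * (sξ * sη) := by
        rw [← ENNReal.mul_rpow_of_nonneg _ _ (by norm_num : (0:ℝ) ≤ 1/2)]
        have hAB : A * B ≤ (u * ((3*(N+1):ℕ):ℝ≥0∞) * (sξ * sη))^(2:ℝ) := by
          have h2 : ∀ z : ℝ≥0∞, z^(2:ℝ) = z * z := by
            intro z
            rw [show (2:ℝ) = ((2:ℕ):ℝ) by norm_num, ENNReal.rpow_natCast]
            ring
          calc A * B ≤ (u * ((N+1:ℕ):ℝ≥0∞) * sξ^(2:ℝ)) * (u * ((3*N+1:ℕ):ℝ≥0∞) * sη^(2:ℝ)) :=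
                mul_le_mul' hX hY
            _ ≤ (u * ((3*(N+1):ℕ):ℝ≥0∞) * (sξ * sη))^(2:ℝ) := by
                simp only [h2]
                have hnat : (((N+1)*(3*N+1):ℕ):ℝ≥0∞) ≤ (((3*(N+1))*(3*(N+1)):ℕ):ℝ≥0∞) := by
                  refine Nat.cast_le.mpr ?_
                  nlinarith
                push_cast at hnat ⊢
                calc u * ((N:ℝ≥0∞)+1) * (sξ*sξ) * (u * (3*(N:ℝ≥0∞)+1) * (sη*sη))
                    = (u*u) * (sξ*sξ*(sη*sη)) * (((N:ℝ≥0∞)+1) * (3*(N:ℝ≥0∞)+1)) := by ring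
                  _ ≤ (u*u) * (sξ*sξ*(sη*sη)) * ((3*((N:ℝ≥0∞)+1)) * (3*((N:ℝ≥0∞)+1))) := by
                      exact mul_le_mul_right hnat _
                  _ = u * (3*((N:ℝ≥0∞)+1)) * (sξ*sη) * (u * (3*((N:ℝ≥0∞)+1)) * (sξ*sη)) := by
                      ring
        calc (A*B)^(1/2:ℝ) ≤ ((u * ((3*(N+1):ℕ):ℝ≥0∞) * (sξ * sη))^(2:ℝ))^(1/2:ℝ) :=
              ENNReal.rpow_le_rpow hAB (by norm_num)
          _ = u * ((3*(N+1):ℕ):ℝ≥0∞) * (sξ * sη) := by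
              rw [← ENNReal.rpow_mul]
              norm_num
      -- put everything together
      have hmain : c * (∫⁻ θ in Set.Ioc (0:ℝ) (2*Real.pi),
          (⨆ (p : ℕ) (_ : K < 2 * p) (_ : p < K),
            (‖∑ j ∈ Finset.range (N + 1),
              F p j * Complex.exp ((j : ℂ) * (θ : ℂ) * Complex.I)‖₊ : ℝ≥0∞)))
          ≤ c * (u * (3 * ((sξ * sT) * sη))) := by
        calc c * (∫⁻ θ in Set.Ioc (0:ℝ) (2*Real.pi), (⨆ (p : ℕ) (_ : K < 2 * p) (_ : p < K),
              (‖∑ j ∈ Finset.range (N + 1),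
                F p j * Complex.exp ((j : ℂ) * (θ : ℂ) * Complex.I)‖₊ : ℝ≥0∞)))
            = ∫⁻ θ in Set.Ioc (0:ℝ) (2*Real.pi), c * (⨆ (p : ℕ) (_ : K < 2 * p) (_ : p < K),
              (‖∑ j ∈ Finset.range (N + 1),
                F p j * Complex.exp ((j : ℂ) * (θ : ℂ) * Complex.I)‖₊ : ℝ≥0∞)) :=
              (lintegral_const_mul' c _ hct).symm
          _ ≤ ∫⁻ θ in Set.Ioc (0:ℝ) (2*Real.pi), sT * ((‖x θ‖₊ : ℝ≥0∞) * ‖y θ‖₊) :=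
              lintegral_mono hptw
          _ = sT * ∫⁻ θ in Set.Ioc (0:ℝ) (2*Real.pi), (‖x θ‖₊ : ℝ≥0∞) * ‖y θ‖₊ :=
              lintegral_const_mul' sT _ hTt
          _ ≤ sT * (A^(1/2:ℝ) * B^(1/2:ℝ)) := mul_le_mul_right hHo _
          _ ≤ sT * (u * ((3*(N+1):ℕ):ℝ≥0∞) * (sξ * sη)) := mul_le_mul_right hsqrt _
          _ = c * (u * (3 * ((sξ * sT) * sη))) := by
              rw [hc]
              push_cast
              ring
      have hI := (ENNReal.mul_le_mul_iff_right hc0 hct).mp hmain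
      unfold circLInt
      refine ENNReal.div_le_of_le_mul' ?_
      exact hI

end
end

section
/- There exists a number δ > 0 such that for every integer q ≥ 1 one has C(q) ≥ δ·√q. (Lemma 2.7, lower bound.) -/
open MeasureTheory
open scoped ENNReal

noncomputable section

/-- `C(q)`: the supremum of `∫_𝕋 max_{1 ≤ p ≤ q} |F_p| dm` over all `q`-tuples
`F₁, …, F_q` of analytic trigonometric polynomials of degree `≤ q` with
`‖F_p‖_{L²(m)} ≤ 1` for every `p`. -/
def Cq (q : ℕ) : ℝ :=
  sSup {r : ℝ | ∃ F : ℕ → ℕ → ℂ,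
    (∀ p, 1 ≤ p → p ≤ q → (∑ n ∈ Finset.range (q + 1), ‖F p n‖ ^ 2) ≤ 1) ∧
    r = circInt (fun θ => ⨆ p ∈ Finset.Icc 1 q,
      ‖∑ n ∈ Finset.range (q + 1), F p n * Complex.exp ((n : ℂ) * (θ : ℂ) * Complex.I)‖)}


private def aa (q k : ℕ) : ℝ := 2 * Real.pi * k / q

private def FF (q p n : ℕ) : ℂ :=
  if n < q then ((Real.sqrt q)⁻¹ : ℝ) * Complex.exp (-((n * aa q (p - 1) : ℝ) : ℂ) * Complex.I)
  else 0

private def SS (q p : ℕ) (θ : ℝ) : ℂ :=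
  ∑ n ∈ Finset.range (q + 1), FF q p n * Complex.exp ((n : ℂ) * (θ : ℂ) * Complex.I)

private lemma norm_FF (q p n : ℕ) : ‖FF q p n‖ = if n < q then (Real.sqrt q)⁻¹ else 0 := by
  unfold FF
  split
  · rw [norm_mul, Complex.norm_real, ← Complex.ofReal_neg,
      Complex.norm_exp_ofReal_mul_I, mul_one, Real.norm_eq_abs,
      abs_of_nonneg (by positivity)]
  · simp

private lemma FF_coef_sum {q : ℕ} (hq : 1 ≤ q) (p : ℕ) :
    (∑ n ∈ Finset.range (q + 1), ‖FF q p n‖ ^ 2) ≤ 1 := by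
  have hq0 : (0:ℝ) < q := by exact_mod_cast hq
  have : ∀ n ∈ Finset.range (q + 1), ‖FF q p n‖ ^ 2
      = if n < q then ((Real.sqrt q)⁻¹) ^ 2 else 0 := by
    intro n _
    rw [norm_FF]
    split <;> simp
  rw [Finset.sum_congr rfl this, ← Finset.sum_filter]
  have hfilter : (Finset.range (q + 1)).filter (· < q) = Finset.range q := by
    ext n
    simp [Nat.lt_succ_iff]
    omega
  rw [hfilter, Finset.sum_const, Finset.card_range, nsmul_eq_mul]
  rw [← Real.sqrt_inv, Real.sq_sqrt (by positivity)]
  rw [mul_inv_le_iff₀ hq0, one_mul]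

private lemma SS_eq {q : ℕ} (p : ℕ) (θ : ℝ) :
    SS q p θ = ∑ n ∈ Finset.range q,
      ((Real.sqrt q)⁻¹ : ℝ) * Complex.exp (((n * (θ - aa q (p - 1)) : ℝ) : ℂ) * Complex.I) := by
  unfold SS
  rw [Finset.sum_range_succ]
  have hlast : FF q p q = 0 := by simp [FF]
  rw [hlast, zero_mul, add_zero]
  refine Finset.sum_congr rfl fun n hn => ?_
  rw [Finset.mem_range] at hn
  unfold FF
  rw [if_pos hn, mul_assoc, ← Complex.exp_add]
  congr 2
  push_cast
  ring



private lemma SS_norm_le {q : ℕ} (p : ℕ) (θ : ℝ) : ‖SS q p θ‖ ≤ Real.sqrt q := by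
  rcases Nat.eq_zero_or_pos q with rfl | hq
  · simp [SS, FF]
  have hsq : 0 < Real.sqrt q := Real.sqrt_pos.2 (by exact_mod_cast hq)
  rw [SS_eq]
  refine le_trans (norm_sum_le _ _) ?_
  have hterm : ∀ n ∈ Finset.range q,
      ‖((Real.sqrt q)⁻¹ : ℝ) * Complex.exp (((n * (θ - aa q (p - 1)) : ℝ) : ℂ) * Complex.I)‖
        = (Real.sqrt q)⁻¹ := by
    intro n _
    rw [norm_mul, Complex.norm_real, Complex.norm_exp_ofReal_mul_I,
      mul_one, Real.norm_eq_abs, abs_of_nonneg (by positivity)]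
  rw [Finset.sum_congr rfl hterm, Finset.sum_const, Finset.card_range, nsmul_eq_mul]
  have hss : Real.sqrt q * Real.sqrt q = (q:ℝ) := Real.mul_self_sqrt (by positivity)
  rw [← hss]
  field_simp
  exact le_of_eq (by rw [Real.sqrt_sq hsq.le])

private lemma SS_lower {q : ℕ} (hq : 1 ≤ q) {k : ℕ} (hk : k < q) {θ : ℝ}
    (h1 : aa q k ≤ θ) (h2 : θ ≤ aa q k + 1 / q) :
    Real.cos 1 * Real.sqrt q ≤ ‖SS q (k + 1) θ‖ := by
  have hq0 : (0:ℝ) < q := by exact_mod_cast hq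
  have hsq : 0 < Real.sqrt q := Real.sqrt_pos.2 hq0
  have hre : (SS q (k+1) θ).re ≤ ‖SS q (k+1) θ‖ := by
    exact Complex.re_le_norm _
  refine le_trans ?_ hre
  rw [SS_eq, Complex.re_sum]
  have hsub : (k + 1 : ℕ) - 1 = k := by omega
  have hterm : ∀ n ∈ Finset.range q,
      (((Real.sqrt q)⁻¹ : ℝ) * Complex.exp (((n * (θ - aa q (k+1-1)) : ℝ) : ℂ) * Complex.I) : ℂ).re
        = (Real.sqrt q)⁻¹ * Real.cos (n * (θ - aa q k)) := by
    intro n _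
    rw [hsub]
    rw [show (((Real.sqrt q)⁻¹ : ℝ) : ℂ) * Complex.exp (((n * (θ - aa q k) : ℝ) : ℂ) * Complex.I)
        = ((Real.sqrt q)⁻¹ : ℝ) * Complex.exp (((n * (θ - aa q k) : ℝ) : ℂ) * Complex.I) from rfl]
    rw [Complex.re_ofReal_mul, Complex.exp_ofReal_mul_I_re]
  rw [Finset.sum_congr rfl hterm]
  have hcos : ∀ n ∈ Finset.range q, (Real.sqrt q)⁻¹ * Real.cos 1
      ≤ (Real.sqrt q)⁻¹ * Real.cos (n * (θ - aa q k)) := by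
    intro n hn
    rw [Finset.mem_range] at hn
    have hφ0 : 0 ≤ θ - aa q k := by linarith
    have hφ1 : θ - aa q k ≤ 1 / q := by linarith
    have hn' : (n : ℝ) ≤ (q : ℝ) - 1 := by
      have : (n : ℝ) + 1 ≤ q := by exact_mod_cast hn
      linarith
    have hx0 : 0 ≤ (n : ℝ) * (θ - aa q k) := by positivity
    have hx1 : (n : ℝ) * (θ - aa q k) ≤ 1 := by
      calc (n : ℝ) * (θ - aa q k) ≤ ((q : ℝ) - 1) * (1 / q) := by
            apply mul_le_mul hn' hφ1 hφ0 (by linarith)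
        _ ≤ 1 := by
            rw [div_eq_mul_inv, one_mul, ← div_eq_mul_inv, div_le_one hq0]
            linarith
    have := Real.cos_le_cos_of_nonneg_of_le_pi hx0
      (by linarith [Real.two_le_pi] : (1:ℝ) ≤ Real.pi) hx1
    exact mul_le_mul_of_nonneg_left this (by positivity)
  refine le_trans ?_ (Finset.sum_le_sum hcos)
  rw [Finset.sum_const, Finset.card_range, nsmul_eq_mul]
  have hss : Real.sqrt q * Real.sqrt q = (q:ℝ) := Real.mul_self_sqrt (by positivity)
  have heq : (q:ℝ) * ((Real.sqrt q)⁻¹ * Real.cos 1) = Real.cos 1 * Real.sqrt q := by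
    field_simp
    rw [Real.sq_sqrt hq0.le]
  rw [heq]



private lemma real_biSup_le {q : ℕ} {v : ℕ → ℝ} {B : ℝ} (hB : 0 ≤ B)
    (h : ∀ p ∈ Finset.Icc 1 q, v p ≤ B) : (⨆ p ∈ Finset.Icc 1 q, v p) ≤ B :=
  Real.iSup_le (fun p => Real.iSup_le (fun hp => h p hp) hB) hB

private lemma le_real_biSup {q : ℕ} {v : ℕ → ℝ} {B : ℝ} (hB : 0 ≤ B)
    (h : ∀ p ∈ Finset.Icc 1 q, v p ≤ B) {p₀ : ℕ} (hp₀ : p₀ ∈ Finset.Icc 1 q) :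
    v p₀ ≤ ⨆ p ∈ Finset.Icc 1 q, v p := by
  have hbdd : BddAbove (Set.range fun p => ⨆ _ : p ∈ Finset.Icc 1 q, v p) := by
    refine ⟨B, ?_⟩
    rintro x ⟨p, rfl⟩
    exact Real.iSup_le (fun hp => h p hp) hB
  have h2 := le_ciSup hbdd p₀
  rwa [ciSup_pos hp₀] at h2

private lemma biSup_eq_sup' {q : ℕ} (hq : 1 ≤ q) {v : ℕ → ℝ} (hv : ∀ p, 0 ≤ v p)
    {B : ℝ} (h : ∀ p ∈ Finset.Icc 1 q, v p ≤ B) :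
    (⨆ p ∈ Finset.Icc 1 q, v p)
      = (Finset.Icc 1 q).sup' ⟨1, Finset.mem_Icc.2 ⟨le_rfl, hq⟩⟩ v := by
  have h1 : (1:ℕ) ∈ Finset.Icc 1 q := Finset.mem_Icc.2 ⟨le_rfl, hq⟩
  have hsup0 : 0 ≤ (Finset.Icc 1 q).sup' ⟨1, h1⟩ v :=
    le_trans (hv 1) (Finset.le_sup' v h1)
  apply le_antisymm
  · exact real_biSup_le hsup0 (fun p hp => Finset.le_sup' v hp)
  · obtain ⟨p₀, hp₀, he⟩ := Finset.exists_mem_eq_sup' ⟨1, h1⟩ v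
    rw [he]
    exact le_real_biSup hsup0 (fun p hp => Finset.le_sup' v hp) hp₀

private def gg (q : ℕ) (θ : ℝ) : ℝ := ⨆ p ∈ Finset.Icc 1 q, ‖SS q p θ‖

private lemma gg_eq_sup' {q : ℕ} (hq : 1 ≤ q) (θ : ℝ) :
    gg q θ = (Finset.Icc 1 q).sup' ⟨1, Finset.mem_Icc.2 ⟨le_rfl, hq⟩⟩
      (fun p => ‖SS q p θ‖) :=
  biSup_eq_sup' hq (fun _ => norm_nonneg _) (B := Real.sqrt q) (fun p _ => SS_norm_le p θ)

private lemma SS_continuous (q p : ℕ) : Continuous (fun θ => SS q p θ) := by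
  unfold SS
  refine continuous_finset_sum _ fun n _ => Continuous.mul continuous_const ?_
  exact Complex.continuous_exp.comp (by fun_prop)

private lemma gg_continuous {q : ℕ} (hq : 1 ≤ q) : Continuous (gg q) := by
  have hne : (Finset.Icc 1 q).Nonempty := ⟨1, Finset.mem_Icc.2 ⟨le_rfl, hq⟩⟩
  have : Continuous (fun θ => (Finset.Icc 1 q).sup' hne (fun p => ‖SS q p θ‖)) := by
    rw [continuous_iff_continuousAt]
    intro x
    exact Filter.Tendsto.finset_sup'_nhds_apply hne
      (fun p _ => (((SS_continuous q p).norm).tendsto x))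
  convert this using 1
  funext θ
  exact gg_eq_sup' hq θ

private lemma gg_nonneg {q : ℕ} (hq : 1 ≤ q) (θ : ℝ) : 0 ≤ gg q θ :=
  le_trans (norm_nonneg (SS q 1 θ))
    (le_real_biSup (Real.sqrt_nonneg _) (fun p _ => SS_norm_le p θ)
      (Finset.mem_Icc.2 ⟨le_rfl, hq⟩))

private lemma gg_lower {q : ℕ} (hq : 1 ≤ q) {k : ℕ} (hk : k < q) {θ : ℝ}
    (h1 : aa q k ≤ θ) (h2 : θ ≤ aa q k + 1 / q) :
    Real.cos 1 * Real.sqrt q ≤ gg q θ := by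
  refine le_trans (SS_lower hq hk h1 h2) ?_
  exact le_real_biSup (Real.sqrt_nonneg _) (fun p _ => SS_norm_le p θ)
    (Finset.mem_Icc.2 ⟨by omega, by omega⟩)



private lemma gg_integral {q : ℕ} (hq : 1 ≤ q) :
    Real.cos 1 * Real.sqrt q ≤ ∫ θ in (0:ℝ)..(2 * Real.pi), gg q θ := by
  have hq0 : (0:ℝ) < q := by exact_mod_cast hq
  have hπ : 0 < Real.pi := Real.pi_pos
  have hc := gg_continuous hq
  have hint : ∀ u v : ℝ, IntervalIntegrable (gg q) MeasureTheory.volume u v :=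
    fun u v => hc.intervalIntegrable u v
  have hsum : (∑ k ∈ Finset.range q, ∫ θ in (aa q k)..(aa q (k+1)), gg q θ)
      = ∫ θ in (aa q 0)..(aa q q), gg q θ :=
    intervalIntegral.sum_integral_adjacent_intervals (fun k _ => hint _ _)
  have h0 : aa q 0 = 0 := by simp [aa]
  have h2π : aa q q = 2 * Real.pi := by
    unfold aa; field_simp
  have hpiece : ∀ k ∈ Finset.range q,
      Real.cos 1 * Real.sqrt q * (1 / q) ≤ ∫ θ in (aa q k)..(aa q (k+1)), gg q θ := by
    intro k hk
    rw [Finset.mem_range] at hk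
    have hsplit : (∫ θ in (aa q k)..(aa q (k+1)), gg q θ)
        = (∫ θ in (aa q k)..(aa q k + 1/q), gg q θ)
          + ∫ θ in (aa q k + 1/q)..(aa q (k+1)), gg q θ :=
      (intervalIntegral.integral_add_adjacent_intervals (hint _ _) (hint _ _)).symm
    have hle1 : aa q k ≤ aa q k + 1/q := by
      have : (0:ℝ) < 1/q := by positivity
      linarith
    have hstep : aa q (k+1) = aa q k + 2*Real.pi/q := by
      unfold aa; push_cast; ring
    have hle2 : aa q k + 1/q ≤ aa q (k+1) := by
      rw [hstep]
      have h1 : (1:ℝ)/q ≤ 2*Real.pi/q := by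
        gcongr
        linarith [Real.two_le_pi]
      linarith
    have hmono : ∀ θ ∈ Set.Icc (aa q k) (aa q k + 1/q),
        Real.cos 1 * Real.sqrt q ≤ gg q θ :=
      fun θ hθ => gg_lower hq hk hθ.1 hθ.2
    have hfirst : Real.cos 1 * Real.sqrt q * (1/q)
        ≤ ∫ θ in (aa q k)..(aa q k + 1/q), gg q θ := by
      have h := intervalIntegral.integral_mono_on hle1
        (intervalIntegrable_const (c := Real.cos 1 * Real.sqrt q)) (hint _ _) hmono
      rw [intervalIntegral.integral_const, smul_eq_mul, add_sub_cancel_left] at h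
      refine le_trans (le_of_eq (by ring)) h
    have hsecond : 0 ≤ ∫ θ in (aa q k + 1/q)..(aa q (k+1)), gg q θ :=
      intervalIntegral.integral_nonneg hle2 (fun u _ => gg_nonneg hq u)
    rw [hsplit]
    linarith
  have htot := Finset.sum_le_sum hpiece
  rw [hsum, h0, h2π] at htot
  refine le_trans ?_ htot
  rw [Finset.sum_const, Finset.card_range, nsmul_eq_mul]
  have : (q:ℝ) * (Real.cos 1 * Real.sqrt q * (1 / q)) = Real.cos 1 * Real.sqrt q := by
    field_simp
  rw [this]




private lemma poly_norm_le {q : ℕ} {F : ℕ → ℕ → ℂ} {p : ℕ}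
    (hF : (∑ n ∈ Finset.range (q + 1), ‖F p n‖ ^ 2) ≤ 1) (θ : ℝ) :
    ‖∑ n ∈ Finset.range (q + 1), F p n * Complex.exp ((n : ℂ) * (θ : ℂ) * Complex.I)‖
      ≤ Real.sqrt (q + 1) := by
  have h1 : ‖∑ n ∈ Finset.range (q + 1), F p n * Complex.exp ((n : ℂ) * (θ : ℂ) * Complex.I)‖
      ≤ ∑ n ∈ Finset.range (q + 1), ‖F p n‖ := by
    refine le_trans (norm_sum_le _ _) (Finset.sum_le_sum fun n _ => ?_)
    rw [norm_mul]
    have he : ‖Complex.exp ((n : ℂ) * (θ : ℂ) * Complex.I)‖ = 1 := by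
      rw [show ((n:ℂ) * (θ:ℂ)) = (((n * θ : ℝ)) : ℂ) by push_cast; ring,
        Complex.norm_exp_ofReal_mul_I]
    rw [he, mul_one]
  refine le_trans h1 (Real.le_sqrt_of_sq_le ?_)
  have hcs := Finset.sum_mul_sq_le_sq_mul_sq (Finset.range (q+1)) (fun _ => (1:ℝ))
    (fun n => ‖F p n‖)
  simp only [one_mul, one_pow] at hcs
  calc (∑ n ∈ Finset.range (q + 1), ‖F p n‖) ^ 2
      ≤ (∑ _n ∈ Finset.range (q + 1), (1:ℝ)) * ∑ n ∈ Finset.range (q+1), ‖F p n‖ ^ 2 := hcs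
    _ ≤ (q + 1) * 1 := by
        apply mul_le_mul ?_ hF (Finset.sum_nonneg fun n _ => by positivity) (by positivity)
        simp
    _ = (q + 1 : ℝ) := mul_one _


private lemma bdd_above_Cq_set (q : ℕ) :
    BddAbove {r : ℝ | ∃ F : ℕ → ℕ → ℂ,
      (∀ p, 1 ≤ p → p ≤ q → (∑ n ∈ Finset.range (q + 1), ‖F p n‖ ^ 2) ≤ 1) ∧
      r = circInt (fun θ => ⨆ p ∈ Finset.Icc 1 q,
        ‖∑ n ∈ Finset.range (q + 1), F p n * Complex.exp ((n : ℂ) * (θ : ℂ) * Complex.I)‖)} := by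
  have hπ : 0 < Real.pi := Real.pi_pos
  refine ⟨Real.sqrt (q + 1), ?_⟩
  rintro r ⟨F, hF, rfl⟩
  set gF : ℝ → ℝ := fun θ => ⨆ p ∈ Finset.Icc 1 q,
    ‖∑ n ∈ Finset.range (q + 1), F p n * Complex.exp ((n : ℂ) * (θ : ℂ) * Complex.I)‖ with hgF
  have hbnd : ∀ θ, gF θ ≤ Real.sqrt (q + 1) := by
    intro θ
    refine real_biSup_le (Real.sqrt_nonneg _) fun p hp => ?_
    rw [Finset.mem_Icc] at hp
    exact poly_norm_le (hF p hp.1 hp.2) θ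
  by_cases hInt : IntervalIntegrable gF MeasureTheory.volume 0 (2 * Real.pi)
  · have hle : (∫ θ in (0:ℝ)..(2 * Real.pi), gF θ)
        ≤ ∫ _θ in (0:ℝ)..(2 * Real.pi), Real.sqrt (q + 1) :=
      intervalIntegral.integral_mono_on (by positivity) hInt intervalIntegrable_const
        (fun θ _ => hbnd θ)
    rw [intervalIntegral.integral_const, smul_eq_mul, sub_zero] at hle
    rw [circInt, div_le_iff₀ (by positivity)]
    calc (∫ θ in (0:ℝ)..(2 * Real.pi), gF θ) ≤ 2 * Real.pi * Real.sqrt (q+1) := hle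
      _ = Real.sqrt (q+1) * (2 * Real.pi) := by ring
  · rw [circInt, intervalIntegral.integral_undef hInt, zero_div]
    positivity

/-- Lemma 2.7 (lower bound): there is `δ > 0` with `C(q) ≥ δ·√q` for all `q ≥ 1`. -/
theorem statement10 :
    ∃ δ : ℝ, 0 < δ ∧ ∀ q : ℕ, 1 ≤ q → δ * Real.sqrt q ≤ Cq q := by
  have hπ : 0 < Real.pi := Real.pi_pos
  refine ⟨Real.cos 1 / (2 * Real.pi), div_pos Real.cos_one_pos (by positivity), ?_⟩
  intro q hq
  have hmem : circInt (gg q) ∈ {r : ℝ | ∃ F : ℕ → ℕ → ℂ,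
      (∀ p, 1 ≤ p → p ≤ q → (∑ n ∈ Finset.range (q + 1), ‖F p n‖ ^ 2) ≤ 1) ∧
      r = circInt (fun θ => ⨆ p ∈ Finset.Icc 1 q,
        ‖∑ n ∈ Finset.range (q + 1), F p n * Complex.exp ((n : ℂ) * (θ : ℂ) * Complex.I)‖)} :=
    ⟨FF q, fun p _ _ => FF_coef_sum hq p, rfl⟩
  have hlow : Real.cos 1 / (2 * Real.pi) * Real.sqrt q ≤ circInt (gg q) := by
    rw [circInt, div_mul_eq_mul_div]
    apply div_le_div_of_nonneg_right ?h (by positivity)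
    case h => exact gg_integral hq
  exact le_trans hlow (le_csSup (bdd_above_Cq_set q) hmem)

end
end

section
/- For every function φ: ℕ → ℂ with Σ_{n≥0} |φ(n)|² < ∞ one has ‖φ‖_{M₃} ≤ (Σ_{n≥0} |φ(n)|²)^{1/2}. Moreover, there exist a contraction T on ℓ²(ℕ) (‖T‖ ≤ 1) and vectors ξ, η ∈ ℓ²(ℕ) with ‖ξ‖·‖η‖ ≤ (Σ_{n≥0} |φ(n)|²)^{1/2} such that φ(n) = ⟨Tⁿ ξ, η⟩ for all n ∈ ℕ. -/
open MeasureTheory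
open scoped ENNReal

noncomputable section

namespace Stmt17

/-- The forward shift on sequences. -/
def shiftFun (x : ℕ → ℂ) : ℕ → ℂ := fun n => match n with | 0 => 0 | m+1 => x m

lemma summable_shiftFun {x : ℕ → ℂ} (hx : Summable fun n => ‖x n‖ ^ (2:ℝ)) :
    Summable fun n => ‖shiftFun x n‖ ^ (2:ℝ) := by
  rw [← summable_nat_add_iff 1]
  exact hx

lemma two_toReal : ((2:ℝ≥0∞)).toReal = (2:ℝ) := by norm_num

lemma summable_of_l2 (x : ℓ2) : Summable fun n => ‖x n‖ ^ (2:ℝ) := by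
  have := (lp.memℓp x).summable (p := 2) (by norm_num)
  rwa [two_toReal] at this

lemma memℓp_shift (x : ℓ2) : Memℓp (shiftFun x) 2 := by
  apply memℓp_gen
  rw [two_toReal]
  exact summable_shiftFun (summable_of_l2 x)

/-- The forward shift as a linear isometry of `ℓ²(ℕ)`. -/
def shiftLin : ℓ2 →ₗᵢ[ℂ] ℓ2 where
  toFun x := ⟨shiftFun x, memℓp_shift x⟩
  map_add' x y := by
    ext n
    cases n <;> simp [shiftFun, lp.coeFn_add, Pi.add_apply] <;> show _ = shiftFun x _ + shiftFun y _ <;> simp [shiftFun]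
  map_smul' c x := by
    ext n
    cases n <;> simp [shiftFun]
  norm_map' x := by
    have hs := summable_shiftFun (summable_of_l2 x)
    have key : (∑' n, ‖shiftFun x n‖ ^ (2:ℝ)) = ∑' n, ‖(x : ℕ → ℂ) n‖ ^ (2:ℝ) := by
      rw [hs.tsum_eq_zero_add]
      simp [shiftFun, Real.zero_rpow]
    rw [lp.norm_eq_tsum_rpow (by norm_num), lp.norm_eq_tsum_rpow (by norm_num), two_toReal]
    exact congrArg (· ^ (1/(2:ℝ))) key

/-- The forward shift as a continuous linear map. -/
def S : ℓ2 →L[ℂ] ℓ2 := shiftLin.toContinuousLinearMap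

lemma norm_S_le : ‖S‖ ≤ 1 := shiftLin.norm_toContinuousLinearMap_le

lemma norm_Spow_le (n : ℕ) : ‖(S ^ n : ℓ2 →L[ℂ] ℓ2)‖ ≤ 1 := by
  induction n with
  | zero => rw [pow_zero]; exact ContinuousLinearMap.norm_id_le
  | succ k ih =>
    calc ‖(S ^ (k+1) : ℓ2 →L[ℂ] ℓ2)‖ ≤ ‖(S ^ k : ℓ2 →L[ℂ] ℓ2)‖ * ‖S‖ := by
          rw [pow_succ]; exact norm_mul_le _ _
      _ ≤ 1 * 1 := mul_le_mul ih norm_S_le (norm_nonneg _) zero_le_one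
      _ = 1 := one_mul 1

/-- The standard basis vector. -/
def e (m : ℕ) : ℓ2 := lp.single 2 m (1:ℂ)

lemma S_single (m : ℕ) : S (e m) = e (m+1) := by
  ext n
  show shiftFun (e m) n = (e (m+1) : ℕ → ℂ) n
  cases n with
  | zero => simp [shiftFun, e, lp.single_apply]
  | succ k =>
    show (e m : ℕ → ℂ) k = _
    simp only [e, lp.single_apply]
    by_cases hk : k = m
    · subst hk; simp
    · rw [Pi.single_eq_of_ne hk, Pi.single_eq_of_ne (by omega)]

lemma Spow_single (n : ℕ) : (S ^ n) (e 0) = e n := by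
  induction n with
  | zero => simp
  | succ k ih => rw [pow_succ', ContinuousLinearMap.mul_apply, ih, S_single]

end Stmt17

/-- If `Σ |φ(n)|² < ∞` then `‖φ‖_{M₃} ≤ (Σ |φ(n)|²)^{1/2}`; moreover there are
a contraction `T` on `ℓ²(ℕ)` and vectors `ξ, η` with
`‖ξ‖·‖η‖ ≤ (Σ |φ(n)|²)^{1/2}` and `φ(n) = ⟨Tⁿ ξ, η⟩` for all `n`. -/
theorem statement17 (φ : ℕ → ℂ) (h : Summable fun n : ℕ => ‖φ n‖ ^ 2) :
    M3 φ ≤ ENNReal.ofReal (Real.sqrt (∑' n : ℕ, ‖φ n‖ ^ 2)) ∧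
    ∃ (T : ℓ2 →L[ℂ] ℓ2) (ξ η : ℓ2), ‖T‖ ≤ 1 ∧
      ‖ξ‖ * ‖η‖ ≤ Real.sqrt (∑' n : ℕ, ‖φ n‖ ^ 2) ∧
      ∀ n : ℕ, φ n = inner ℂ ((T ^ n) ξ) η := by
  have hmem : Memℓp φ 2 := by
    apply memℓp_gen
    rw [Stmt17.two_toReal]
    have e2 : (fun n => ‖φ n‖ ^ (2:ℝ)) = fun n => ‖φ n‖ ^ (2:ℕ) :=
      funext fun n => by rw [show (2:ℝ) = ((2:ℕ):ℝ) by norm_num, Real.rpow_natCast]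
    rw [e2]; exact h
  set η : ℓ2 := ⟨φ, hmem⟩ with hηdef
  set ξ : ℓ2 := Stmt17.e 0 with hξdef
  have hξ : ‖ξ‖ = 1 :=
    (lp.norm_single (p := 2) (E := fun _ : ℕ => ℂ) (by norm_num) 0 (1:ℂ)).trans norm_one
  have hη : ‖η‖ = Real.sqrt (∑' n : ℕ, ‖φ n‖ ^ 2) := by
    rw [hηdef]
    rw [lp.norm_eq_tsum_rpow (by norm_num), Stmt17.two_toReal, Real.sqrt_eq_rpow]
    exact congrArg (· ^ (1/(2:ℝ)))
      (tsum_congr fun n => by rw [show (2:ℝ) = ((2:ℕ):ℝ) by norm_num, Real.rpow_natCast])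
  have hφn : ∀ n : ℕ, φ n = inner ℂ ((Stmt17.S ^ n) ξ) η := by
    intro n
    rw [hξdef, Stmt17.Spow_single]
    show φ n = inner ℂ (lp.single 2 n (1:ℂ)) η
    rw [lp.inner_single_left]
    simp [RCLike.inner_apply]
    rfl
  constructor
  · -- the M3 bound
    set T := Stmt17.S
    have hrel : ∀ i k j : ℕ, φ (i + k + j) =
        inner ℂ ((fun i => (T ^ i) ξ) i)
          ((fun k => ContinuousLinearMap.adjoint (T ^ k)) k
            ((fun j => ContinuousLinearMap.adjoint (T ^ j) η) j)) := by
      intro i k j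
      simp only []
      rw [ContinuousLinearMap.adjoint_inner_right, ContinuousLinearMap.adjoint_inner_right]
      rw [show (T ^ j) ((T ^ k) ((T ^ i) ξ)) = (T ^ (i + k + j)) ξ by
        rw [show i + k + j = j + (k + i) by ring, pow_add, pow_add]
        simp [ContinuousLinearMap.mul_apply]]
      exact hφn (i + k + j)
    refine le_trans (iInf_le _ (fun i => (T ^ i) ξ)) ?_
    refine le_trans (iInf_le _ (fun k => ContinuousLinearMap.adjoint (T ^ k))) ?_
    refine le_trans (iInf_le _ (fun j => ContinuousLinearMap.adjoint (T ^ j) η)) ?_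
    refine le_trans (iInf_le _ hrel) ?_
    have h1 : (⨆ i, (‖(T ^ i) ξ‖₊ : ℝ≥0∞)) ≤ 1 := by
      refine iSup_le fun i => ?_
      have hb : ‖(T ^ i) ξ‖ ≤ 1 := by
        calc ‖(T ^ i) ξ‖ ≤ ‖(T ^ i : ℓ2 →L[ℂ] ℓ2)‖ * ‖ξ‖ := ContinuousLinearMap.le_opNorm _ _
        _ ≤ 1 * 1 := mul_le_mul (Stmt17.norm_Spow_le i) (le_of_eq hξ) (norm_nonneg _) zero_le_one
        _ = 1 := one_mul 1
      exact_mod_cast hb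
    have h2 : (⨆ k, (‖ContinuousLinearMap.adjoint (T ^ k : ℓ2 →L[ℂ] ℓ2)‖₊ : ℝ≥0∞)) ≤ 1 := by
      refine iSup_le fun k => ?_
      have hb : ‖ContinuousLinearMap.adjoint (T ^ k : ℓ2 →L[ℂ] ℓ2)‖ ≤ 1 := by
        calc ‖ContinuousLinearMap.adjoint (T ^ k : ℓ2 →L[ℂ] ℓ2)‖
            = ‖(T ^ k : ℓ2 →L[ℂ] ℓ2)‖ := ContinuousLinearMap.adjoint.norm_map _
          _ ≤ 1 := Stmt17.norm_Spow_le k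
      exact_mod_cast hb
    have h3 : (⨆ j, (‖ContinuousLinearMap.adjoint (T ^ j : ℓ2 →L[ℂ] ℓ2) η‖₊ : ℝ≥0∞)) ≤
        ENNReal.ofReal (Real.sqrt (∑' n : ℕ, ‖φ n‖ ^ 2)) := by
      refine iSup_le fun j => ?_
      rw [← enorm_eq_nnnorm, ← ofReal_norm]
      refine ENNReal.ofReal_le_ofReal ?_
      calc ‖ContinuousLinearMap.adjoint (T ^ j : ℓ2 →L[ℂ] ℓ2) η‖
          ≤ ‖ContinuousLinearMap.adjoint (T ^ j : ℓ2 →L[ℂ] ℓ2)‖ * ‖η‖ :=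
            ContinuousLinearMap.le_opNorm _ _
        _ ≤ 1 * ‖η‖ := by
            refine mul_le_mul_of_nonneg_right ?_ (norm_nonneg _)
            rw [ContinuousLinearMap.adjoint.norm_map]
            exact Stmt17.norm_Spow_le j
        _ = Real.sqrt (∑' n : ℕ, ‖φ n‖ ^ 2) := by rw [one_mul, hη]
    calc ((⨆ i, (‖(T ^ i) ξ‖₊ : ℝ≥0∞)) *
          ⨆ k, (‖ContinuousLinearMap.adjoint (T ^ k : ℓ2 →L[ℂ] ℓ2)‖₊ : ℝ≥0∞)) *
          ⨆ j, (‖ContinuousLinearMap.adjoint (T ^ j : ℓ2 →L[ℂ] ℓ2) η‖₊ : ℝ≥0∞)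
        ≤ (1 * 1) * ENNReal.ofReal (Real.sqrt (∑' n : ℕ, ‖φ n‖ ^ 2)) :=
          mul_le_mul' (mul_le_mul' h1 h2) h3
      _ = ENNReal.ofReal (Real.sqrt (∑' n : ℕ, ‖φ n‖ ^ 2)) := by rw [one_mul, one_mul]
  · exact ⟨Stmt17.S, ξ, η, Stmt17.norm_S_le, by rw [hξ, hη, one_mul], hφn⟩

end
end
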